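/- arXiv:math/0603279 — 3 statements merged into one kernel-verified Lean document; each statement's English description precedes it below -/
import Mathlib

section
/- Under the bijection F ↦ (id ⊗ ε) ∘ F between O-colinear maps V → W ⊗_k A and L-colinear maps V → W the following hold. (ii) If the L-colinear maps f : V → W and g : W → Z correspond to the O-colinear maps f̄ : V → W ⊗ A and ḡ : W → Z ⊗ A, then the composite g ∘ f corresponds to (id_Z ⊗ m_A) ∘ (ḡ ⊗ id_A) ∘ f̄, where m_A is the multiplication of A. (iii) If L-colinear maps fᵢ : Vᵢ → Wᵢ (i = 0, 1) correspond to f̄ᵢ : Vᵢ → Wᵢ ⊗ A, then the tensor product map f₀ ⊗ f₁ : V₀ ⊗_k V₁ → W₀ ⊗_k W₁ (which is L-colinear for the diagonal coactions) corresponds to (id_{W₀⊗W₁} ⊗ m_A) ∘ τ₍₂₃₎ ∘ (f̄₀ ⊗ f̄₁), where τ₍₂₃₎ : W₀ ⊗ A ⊗ W₁ ⊗ A → W₀ ⊗ W₁ ⊗ A ⊗ A interchanges the second and third tensor factors. -/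
open TensorProduct

namespace PaperQuotient

variable {k : Type} [Field k]

section Comod

variable (k) (O : Type) [AddCommGroup O] [Module k O] [Coalgebra k O]

/-- The axioms of a right `O`-comodule structure on `V` given by the coaction `ρ`. -/
structure IsComod {V : Type} [AddCommGroup V] [Module k V]
    (ρ : V →ₗ[k] V ⊗[k] O) : Prop where
  coassoc : ∀ v : V,
    (TensorProduct.assoc k V O O) ((TensorProduct.map ρ (LinearMap.id : O →ₗ[k] O)) (ρ v)) =
      (TensorProduct.map (LinearMap.id : V →ₗ[k] V) (Coalgebra.comul (R := k))) (ρ v)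
  counit : ∀ v : V,
    (TensorProduct.rid k V)
      ((TensorProduct.map (LinearMap.id : V →ₗ[k] V) (Coalgebra.counit (R := k))) (ρ v)) = v

/-- `f : V → W` is colinear with respect to the coactions `ρV` and `ρW`. -/
def IsColinear {V W : Type} [AddCommGroup V] [Module k V] [AddCommGroup W] [Module k W]
    (ρV : V →ₗ[k] V ⊗[k] O) (ρW : W →ₗ[k] W ⊗[k] O) (f : V →ₗ[k] W) : Prop :=
  ∀ v : V, ρW (f v) = (TensorProduct.map f (LinearMap.id : O →ₗ[k] O)) (ρV v)

/-- The map `id ⊗ ε : V ⊗ O → V`. -/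
noncomputable def counitMap {V : Type} [AddCommGroup V] [Module k V] :
    V ⊗[k] O →ₗ[k] V :=
  (TensorProduct.rid k V).toLinearMap ∘ₗ
    TensorProduct.map (LinearMap.id : V →ₗ[k] V) (Coalgebra.counit (R := k))

/-- The "free" right coaction `id_V ⊗ Δ` on `V ⊗ O`. -/
noncomputable def freeCoact {V : Type} [AddCommGroup V] [Module k V] :
    V ⊗[k] O →ₗ[k] (V ⊗[k] O) ⊗[k] O :=
  (TensorProduct.assoc k V O O).symm.toLinearMap ∘ₗ
    LinearMap.lTensor V (Coalgebra.comul (R := k))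

end Comod

section CotensorDef

variable (k)
variable {O : Type} [AddCommGroup O] [Module k O] [Coalgebra k O]
variable {L : Type} [AddCommGroup L] [Module k L]

/-- The difference of the two maps `U ⊗ O → U ⊗ (L ⊗ O)` whose equalizer is the
cotensor product `U □_L O`; here `ql : O → L` is the (linear) quotient map. -/
noncomputable def cotensorObstruction (ql : O →ₗ[k] L)
    {U : Type} [AddCommGroup U] [Module k U] (ρU : U →ₗ[k] U ⊗[k] L) :
    U ⊗[k] O →ₗ[k] U ⊗[k] (L ⊗[k] O) :=
  (TensorProduct.assoc k U L O).toLinearMap ∘ₗ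
      (TensorProduct.map ρU (LinearMap.id : O →ₗ[k] O))
    - TensorProduct.map (LinearMap.id : U →ₗ[k] U)
        ((TensorProduct.map ql (LinearMap.id : O →ₗ[k] O)) ∘ₗ Coalgebra.comul (R := k))

/-- The cotensor product `U □_L O` as a subspace of `U ⊗ O`. -/
noncomputable def cotensor (ql : O →ₗ[k] L)
    {U : Type} [AddCommGroup U] [Module k U] (ρU : U →ₗ[k] U ⊗[k] L) :
    Submodule k (U ⊗[k] O) :=
  LinearMap.ker (cotensorObstruction k ql ρU)

end CotensorDef

section HopfSetup

variable (k)
variable (O : Type) [CommRing O] [HopfAlgebra k O]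

/-- `A` is a Hopf subalgebra of `O`: it is closed under comultiplication and antipode. -/
structure IsHopfSub (A : Subalgebra k O) : Prop where
  comul_mem : ∀ a ∈ A, Coalgebra.comul (R := k) a ∈
    Submodule.span k {x : O ⊗[k] O | ∃ b ∈ A, ∃ c ∈ A, x = b ⊗ₜ[k] c}
  antipode_mem : ∀ a ∈ A, HopfAlgebra.antipode (R := k) a ∈ A

/-- The set of elements of the augmentation ideal `A⁺ = A ∩ ker ε` of `A`. -/
def augSet (A : Subalgebra k O) : Set O :=
  {a : O | a ∈ A ∧ Coalgebra.counit (R := k) a = 0}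

variable (L : Type) [CommRing L] [HopfAlgebra k L]

/-- `q : O → L` realizes `L` as the quotient Hopf algebra `O ⊗_A k = O/(A⁺O)`. -/
structure IsQuotientHopf (A : Subalgebra k O) (q : O →ₐc[k] L) : Prop where
  surj : Function.Surjective q
  ker : RingHom.ker (q : O →ₐ[k] L) = Ideal.span (augSet k O A)

/-- The coaction of `L` on an `O`-comodule obtained by restriction along `q`. -/
noncomputable def resCoact (q : O →ₐc[k] L) {V : Type} [AddCommGroup V] [Module k V]
    (ρV : V →ₗ[k] V ⊗[k] O) : V →ₗ[k] V ⊗[k] L :=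
  (LinearMap.lTensor V (q : O →ₗ[k] L)) ∘ₗ ρV

/-- The multiplication map `(U ⊗ O) ⊗ O → U ⊗ O`, `(u ⊗ g) ⊗ h ↦ u ⊗ gh`. -/
noncomputable def multMap (U : Type) [AddCommGroup U] [Module k U] :
    (U ⊗[k] O) ⊗[k] O →ₗ[k] U ⊗[k] O :=
  (LinearMap.lTensor U (LinearMap.mul' k O)) ∘ₗ (TensorProduct.assoc k U O O).toLinearMap

/-- The diagonal coaction on the tensor product of two comodules. -/
noncomputable def tensorCoact {X Y : Type} [AddCommGroup X] [Module k X]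
    [AddCommGroup Y] [Module k Y]
    (ρX : X →ₗ[k] X ⊗[k] O) (ρY : Y →ₗ[k] Y ⊗[k] O) :
    X ⊗[k] Y →ₗ[k] (X ⊗[k] Y) ⊗[k] O :=
  (TensorProduct.map (LinearMap.id : X ⊗[k] Y →ₗ[k] X ⊗[k] Y) (LinearMap.mul' k O)) ∘ₗ
    (TensorProduct.tensorTensorTensorComm k X O Y O).toLinearMap ∘ₗ
      (TensorProduct.map ρX ρY)

/-- The diagonal coaction on `X ⊗ O`, `x ⊗ a ↦ Σ (x₀ ⊗ a₁) ⊗ x₁a₂`. -/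
noncomputable def diagCoact {X : Type} [AddCommGroup X] [Module k X]
    (ρX : X →ₗ[k] X ⊗[k] O) :
    X ⊗[k] O →ₗ[k] (X ⊗[k] O) ⊗[k] O :=
  tensorCoact k O ρX (Coalgebra.comul (R := k))

end HopfSetup

end PaperQuotient

namespace PaperQuotient

/-- A bundled right `O`-comodule. -/
structure Comod (k O : Type) [Field k] [AddCommGroup O] [Module k O] [Coalgebra k O] where
  carrier : Type
  [acg : AddCommGroup carrier]
  [mod : Module k carrier]
  ρ : carrier →ₗ[k] carrier ⊗[k] O
  comod : IsComod k O ρ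

attribute [instance] Comod.acg Comod.mod

end PaperQuotient

/-!
The lifted maps are composites of maps that are colinear for the diagonal coactions:
`f̄`, `ḡ ⊗ id` and `f̄₀ ⊗ f̄₁` by hypothesis, and the multiplications `(Z ⊗ O) ⊗ O → Z ⊗ O`
and `(W₀ ⊗ O) ⊗ (W₁ ⊗ O) → (W₀ ⊗ W₁) ⊗ O`, because `Δ` is multiplicative and `O` is
commutative. They take values in `_ ⊗ A` because `A` is closed under multiplication, and
`id ⊗ ε` turns them into `g ∘ f` and `f₀ ⊗ f₁` because `ε` is multiplicative. Finally
`f₀ ⊗ f₁` is `L`-colinear because restricting coactions along the algebra map `q` commutes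
with forming diagonal coactions.
-/

namespace PaperQuotient

open TensorProduct LinearMap

variable {k : Type} [Field k]

section TensorMul

variable {R S : Type} [Semiring R] [Algebra k R] [Semiring S] [Algebra k S]
  {X Y X' Y' : Type} [AddCommGroup X] [Module k X] [AddCommGroup Y] [Module k Y]
  [AddCommGroup X'] [Module k X'] [AddCommGroup Y'] [Module k Y']

variable (k R X Y) in
noncomputable def tensorMul : (X ⊗[k] R) ⊗[k] (Y ⊗[k] R) →ₗ[k] (X ⊗[k] Y) ⊗[k] R :=
  map (LinearMap.id : X ⊗[k] Y →ₗ[k] X ⊗[k] Y) (LinearMap.mul' k R) ∘ₗ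
    (tensorTensorTensorComm k X R Y R).toLinearMap

@[simp]
lemma tensorMul_tmul (x : X) (a : R) (y : Y) (b : R) :
    tensorMul k R X Y ((x ⊗ₜ a) ⊗ₜ (y ⊗ₜ b)) = (x ⊗ₜ y) ⊗ₜ (a * b) := rfl

lemma tensorMul_comp_map_rTensor (f : X →ₗ[k] X') (g : Y →ₗ[k] Y') :
    tensorMul k R X' Y' ∘ₗ map (rTensor R f) (rTensor R g) =
      rTensor R (map f g) ∘ₗ tensorMul k R X Y := by
  ext; simp

lemma tensorMul_comp_map_lTensor (φ : R →ₐ[k] S) :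
    tensorMul k S X Y ∘ₗ map (lTensor X φ.toLinearMap) (lTensor Y φ.toLinearMap) =
      lTensor (X ⊗[k] Y) φ.toLinearMap ∘ₗ tensorMul k R X Y := by
  ext; simp

end TensorMul

section Colinear

variable {C : Type} [AddCommGroup C] [Module k C]
  {U V W : Type} [AddCommGroup U] [Module k U] [AddCommGroup V] [Module k V]
  [AddCommGroup W] [Module k W]

lemma isColinear_iff {ρV : V →ₗ[k] V ⊗[k] C} {ρW : W →ₗ[k] W ⊗[k] C} {f : V →ₗ[k] W} :
    IsColinear k C ρV ρW f ↔ ρW ∘ₗ f = rTensor C f ∘ₗ ρV := by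
  rw [LinearMap.ext_iff]; rfl

lemma isColinear_id (ρ : V →ₗ[k] V ⊗[k] C) : IsColinear k C ρ ρ LinearMap.id := by
  simp [IsColinear]

lemma IsColinear.comp {ρU : U →ₗ[k] U ⊗[k] C} {ρV : V →ₗ[k] V ⊗[k] C}
    {ρW : W →ₗ[k] W ⊗[k] C} {f : U →ₗ[k] V} {g : V →ₗ[k] W}
    (hf : IsColinear k C ρU ρV f) (hg : IsColinear k C ρV ρW g) :
    IsColinear k C ρU ρW (g ∘ₗ f) := by
  rw [isColinear_iff] at *
  rw [← comp_assoc, hg, comp_assoc, hf, ← comp_assoc, ← rTensor_comp]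

lemma counitMap_comp_rTensor [Coalgebra k C] (g : V →ₗ[k] W) :
    counitMap k C ∘ₗ rTensor C g = g ∘ₗ counitMap k C := by
  ext; simp [counitMap]

end Colinear

section Hopf

variable {H : Type} [CommRing H] [HopfAlgebra k H]
  {V W X Y X' Y' Z : Type} [AddCommGroup V] [Module k V]
  [AddCommGroup W] [Module k W] [AddCommGroup X] [Module k X] [AddCommGroup Y] [Module k Y]
  [AddCommGroup X'] [Module k X'] [AddCommGroup Y'] [Module k Y'] [AddCommGroup Z] [Module k Z]

lemma tensorCoact_eq (ρX : X →ₗ[k] X ⊗[k] H) (ρY : Y →ₗ[k] Y ⊗[k] H) :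
    tensorCoact k H ρX ρY = tensorMul k H X Y ∘ₗ map ρX ρY := rfl

lemma IsColinear.tensorMap {ρX : X →ₗ[k] X ⊗[k] H} {ρY : Y →ₗ[k] Y ⊗[k] H}
    {ρX' : X' →ₗ[k] X' ⊗[k] H} {ρY' : Y' →ₗ[k] Y' ⊗[k] H} {f : X →ₗ[k] X'} {g : Y →ₗ[k] Y'}
    (hf : IsColinear k H ρX ρX' f) (hg : IsColinear k H ρY ρY' g) :
    IsColinear k H (tensorCoact k H ρX ρY) (tensorCoact k H ρX' ρY') (map f g) := by
  rw [isColinear_iff] at *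
  calc tensorCoact k H ρX' ρY' ∘ₗ map f g
      = tensorMul k H X' Y' ∘ₗ map (ρX' ∘ₗ f) (ρY' ∘ₗ g) := by
        rw [tensorCoact_eq, comp_assoc, ← map_comp]
    _ = (tensorMul k H X' Y' ∘ₗ map (rTensor H f) (rTensor H g)) ∘ₗ map ρX ρY := by
        rw [hf, hg, map_comp, comp_assoc]
    _ = rTensor H (map f g) ∘ₗ tensorCoact k H ρX ρY := by
        rw [tensorMul_comp_map_rTensor, comp_assoc, tensorCoact_eq]

lemma multMap_isColinear (ρZ : Z →ₗ[k] Z ⊗[k] H) :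
    IsColinear k H (tensorCoact k H (diagCoact k H ρZ) (Coalgebra.comul (R := k)))
      (diagCoact k H ρZ) (multMap k H Z) := by
  rw [isColinear_iff]
  ext z a b
  simp only [comp_apply, AlgebraTensorModule.curry_apply, curry_apply, coe_restrictScalars,
    diagCoact, tensorCoact_eq, map_tmul, multMap, LinearEquiv.coe_coe,
    TensorProduct.assoc_tmul, lTensor_tmul, mul'_apply, Bialgebra.comul_mul]
  generalize ρZ z = u
  generalize Coalgebra.comul (R := k) a = c
  generalize Coalgebra.comul (R := k) b = d
  induction u using TensorProduct.induction_on with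
  | zero => simp
  | add u u' hu hu' => simp only [add_tmul, map_add, hu, hu']
  | tmul z₀ z₁ =>
  induction c using TensorProduct.induction_on with
  | zero => simp
  | add c c' hc hc' => simp only [tmul_add, add_tmul, map_add, add_mul, hc, hc']
  | tmul a₁ a₂ =>
  induction d using TensorProduct.induction_on with
  | zero => simp
  | add d d' hd hd' => simp only [tmul_add, map_add, mul_add, hd, hd']
  | tmul b₁ b₂ => simp [mul_assoc]

lemma tensorMul_isColinear (ρX : X →ₗ[k] X ⊗[k] H) (ρY : Y →ₗ[k] Y ⊗[k] H) :
    IsColinear k H (tensorCoact k H (diagCoact k H ρX) (diagCoact k H ρY))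
      (diagCoact k H (tensorCoact k H ρX ρY)) (tensorMul k H X Y) := by
  rw [isColinear_iff]
  ext x a y b
  simp only [comp_apply, AlgebraTensorModule.curry_apply, curry_apply, coe_restrictScalars,
    diagCoact, tensorCoact_eq, map_tmul, tensorMul_tmul, Bialgebra.comul_mul]
  generalize ρX x = u
  generalize ρY y = v
  generalize Coalgebra.comul (R := k) a = c
  generalize Coalgebra.comul (R := k) b = d
  induction u using TensorProduct.induction_on with
  | zero => simp
  | add u u' hu hu' => simp only [add_tmul, map_add, hu, hu']
  | tmul x₀ x₁ =>
  induction v using TensorProduct.induction_on with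
  | zero => simp
  | add v v' hv hv' => simp only [tmul_add, add_tmul, map_add, hv, hv']
  | tmul y₀ y₁ =>
  induction c using TensorProduct.induction_on with
  | zero => simp
  | add c c' hc hc' => simp only [tmul_add, add_tmul, map_add, add_mul, hc, hc']
  | tmul a₁ a₂ =>
  induction d using TensorProduct.induction_on with
  | zero => simp
  | add d d' hd hd' => simp only [tmul_add, map_add, mul_add, hd, hd']
  | tmul b₁ b₂ => simp [mul_mul_mul_comm]

lemma counitMap_comp_multMap :
    counitMap k H ∘ₗ multMap k H Z = counitMap k H ∘ₗ rTensor H (counitMap k H) := by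
  ext; simp [counitMap, multMap, smul_smul, mul_comm]

lemma counitMap_comp_tensorMul :
    counitMap k H ∘ₗ tensorMul k H X Y = map (counitMap k H) (counitMap k H) := by
  ext; simp [counitMap, smul_tmul', smul_smul, tmul_smul, mul_comm]

lemma counitMap_comp_multMap_comp {f : V →ₗ[k] W} {g : W →ₗ[k] Z}
    {fbar : V →ₗ[k] W ⊗[k] H} {gbar : W →ₗ[k] Z ⊗[k] H}
    (hf : counitMap k H ∘ₗ fbar = f) (hg : counitMap k H ∘ₗ gbar = g) :
    counitMap k H ∘ₗ multMap k H Z ∘ₗ rTensor H gbar ∘ₗ fbar = g ∘ₗ f := by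
  rw [← comp_assoc, counitMap_comp_multMap, comp_assoc, ← comp_assoc fbar (rTensor H gbar),
    ← rTensor_comp, hg, ← comp_assoc, counitMap_comp_rTensor, comp_assoc, hf]

lemma counitMap_comp_tensorMul_comp_map {V₀ V₁ : Type} [AddCommGroup V₀] [Module k V₀]
    [AddCommGroup V₁] [Module k V₁] {f₀ : V₀ →ₗ[k] X} {f₁ : V₁ →ₗ[k] Y}
    {fbar₀ : V₀ →ₗ[k] X ⊗[k] H} {fbar₁ : V₁ →ₗ[k] Y ⊗[k] H}
    (hf₀ : counitMap k H ∘ₗ fbar₀ = f₀) (hf₁ : counitMap k H ∘ₗ fbar₁ = f₁) :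
    counitMap k H ∘ₗ tensorMul k H X Y ∘ₗ map fbar₀ fbar₁ = map f₀ f₁ := by
  rw [← comp_assoc, counitMap_comp_tensorMul, ← map_comp, hf₀, hf₁]

lemma resCoact_tensorCoact {L : Type} [CommRing L] [HopfAlgebra k L] (q : H →ₐc[k] L)
    (ρX : X →ₗ[k] X ⊗[k] H) (ρY : Y →ₗ[k] Y ⊗[k] H) :
    resCoact k H L q (tensorCoact k H ρX ρY) =
      tensorCoact k L (resCoact k H L q ρX) (resCoact k H L q ρY) := by
  rw [resCoact, tensorCoact_eq, tensorCoact_eq, resCoact, resCoact, map_comp, ← comp_assoc,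
    ← comp_assoc]
  exact congrArg (· ∘ₗ map ρX ρY) (tensorMul_comp_map_lTensor (q : H →ₐ[k] L)).symm

end Hopf

lemma range_map_le_range_map {M N M' N' P Q : Type} [AddCommGroup M] [Module k M]
    [AddCommGroup N] [Module k N] [AddCommGroup M'] [Module k M'] [AddCommGroup N']
    [Module k N'] [AddCommGroup P] [Module k P] [AddCommGroup Q] [Module k Q]
    {f : M →ₗ[k] P} {g : N →ₗ[k] Q} {f' : M' →ₗ[k] P} {g' : N' →ₗ[k] Q}
    (hf : range f ≤ range f') (hg : range g ≤ range g') :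
    range (map f g) ≤ range (map f' g') := by
  rw [range_map, range_map]
  exact Submodule.map₂_le_map₂ hf hg

section Range

variable {H : Type} [CommRing H] [HopfAlgebra k H] (A : Subalgebra k H)
  {V W X Y Z : Type} [AddCommGroup V] [Module k V] [AddCommGroup W] [Module k W]
  [AddCommGroup X] [Module k X] [AddCommGroup Y] [Module k Y] [AddCommGroup Z] [Module k Z]

lemma multMap_comp_map_lTensor {R : Type} [Semiring R] [Algebra k R] (φ : R →ₐ[k] H) :
    multMap k H Z ∘ₗ map (lTensor Z φ.toLinearMap) φ.toLinearMap =
      lTensor Z φ.toLinearMap ∘ₗ lTensor Z (mul' k R) ∘ₗ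
        (TensorProduct.assoc k Z R R).toLinearMap := by
  ext; simp [multMap]

lemma range_multMap_comp_le {fbar : V →ₗ[k] W ⊗[k] H} {gbar : W →ₗ[k] Z ⊗[k] H}
    (hfbar : range fbar ≤ range (lTensor W A.toSubmodule.subtype))
    (hgbar : range gbar ≤ range (lTensor Z A.toSubmodule.subtype)) :
    range (multMap k H Z ∘ₗ rTensor H gbar ∘ₗ fbar) ≤
      range (lTensor Z A.toSubmodule.subtype) := by
  calc range (multMap k H Z ∘ₗ rTensor H gbar ∘ₗ fbar)
      ≤ range ((multMap k H Z ∘ₗ rTensor H gbar) ∘ₗ lTensor W A.val.toLinearMap) := by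
        rw [← comp_assoc, range_comp, range_comp]
        exact Submodule.map_mono hfbar
    _ ≤ range (multMap k H Z ∘ₗ map (lTensor Z A.val.toLinearMap) A.val.toLinearMap) := by
        rw [comp_assoc, rTensor_comp_lTensor, range_comp, range_comp]
        exact Submodule.map_mono (range_map_le_range_map hgbar le_rfl)
    _ ≤ range (lTensor Z A.toSubmodule.subtype) := by
        rw [multMap_comp_map_lTensor]
        exact range_comp_le_range _ _

lemma range_tensorMul_comp_map_le {fbar₀ : V →ₗ[k] X ⊗[k] H} {fbar₁ : W →ₗ[k] Y ⊗[k] H}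
    (hfbar₀ : range fbar₀ ≤ range (lTensor X A.toSubmodule.subtype))
    (hfbar₁ : range fbar₁ ≤ range (lTensor Y A.toSubmodule.subtype)) :
    range (tensorMul k H X Y ∘ₗ map fbar₀ fbar₁) ≤
      range (lTensor (X ⊗[k] Y) A.toSubmodule.subtype) := by
  calc range (tensorMul k H X Y ∘ₗ map fbar₀ fbar₁)
      ≤ range (tensorMul k H X Y ∘ₗ
          map (lTensor X A.val.toLinearMap) (lTensor Y A.val.toLinearMap)) := by
        rw [range_comp, range_comp]
        exact Submodule.map_mono (range_map_le_range_map hfbar₀ hfbar₁)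
    _ ≤ range (lTensor (X ⊗[k] Y) A.toSubmodule.subtype) := by
        rw [tensorMul_comp_map_lTensor]
        exact range_comp_le_range _ _

end Range

end PaperQuotient

open PaperQuotient in
theorem statement10_general
    (k : Type) [Field k] (O : Type) [CommRing O] [HopfAlgebra k O]
    (A : Subalgebra k O)
    (L : Type) [CommRing L] [HopfAlgebra k L]
    (q : O →ₐc[k] L)
    -- data for (ii)
    (V : Type) [AddCommGroup V] [Module k V]
    (ρV : V →ₗ[k] V ⊗[k] O)
    (W : Type) [AddCommGroup W] [Module k W]
    (ρW : W →ₗ[k] W ⊗[k] O)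
    (Z : Type) [AddCommGroup Z] [Module k Z]
    (ρZ : Z →ₗ[k] Z ⊗[k] O)
    (f : V →ₗ[k] W)
    (g : W →ₗ[k] Z)
    (fbar : V →ₗ[k] W ⊗[k] O)
    (hfbar : IsColinear k O ρV (diagCoact k O ρW) fbar)
    (hfbarrange : LinearMap.range fbar ≤
      LinearMap.range (LinearMap.lTensor W A.toSubmodule.subtype))
    (hfbarf : (counitMap k O) ∘ₗ fbar = f)
    (gbar : W →ₗ[k] Z ⊗[k] O)
    (hgbar : IsColinear k O ρW (diagCoact k O ρZ) gbar)
    (hgbarrange : LinearMap.range gbar ≤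
      LinearMap.range (LinearMap.lTensor Z A.toSubmodule.subtype))
    (hgbarg : (counitMap k O) ∘ₗ gbar = g)
    -- data for (iii)
    (V₀ : Type) [AddCommGroup V₀] [Module k V₀]
    (ρV₀ : V₀ →ₗ[k] V₀ ⊗[k] O)
    (V₁ : Type) [AddCommGroup V₁] [Module k V₁]
    (ρV₁ : V₁ →ₗ[k] V₁ ⊗[k] O)
    (W₀ : Type) [AddCommGroup W₀] [Module k W₀]
    (ρW₀ : W₀ →ₗ[k] W₀ ⊗[k] O)
    (W₁ : Type) [AddCommGroup W₁] [Module k W₁]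
    (ρW₁ : W₁ →ₗ[k] W₁ ⊗[k] O)
    (f₀ : V₀ →ₗ[k] W₀)
    (hf₀ : IsColinear k L (resCoact k O L q ρV₀) (resCoact k O L q ρW₀) f₀)
    (f₁ : V₁ →ₗ[k] W₁)
    (hf₁ : IsColinear k L (resCoact k O L q ρV₁) (resCoact k O L q ρW₁) f₁)
    (fbar₀ : V₀ →ₗ[k] W₀ ⊗[k] O)
    (hfbar₀ : IsColinear k O ρV₀ (diagCoact k O ρW₀) fbar₀)
    (hfbar₀range : LinearMap.range fbar₀ ≤
      LinearMap.range (LinearMap.lTensor W₀ A.toSubmodule.subtype))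
    (hfbar₀f : (counitMap k O) ∘ₗ fbar₀ = f₀)
    (fbar₁ : V₁ →ₗ[k] W₁ ⊗[k] O)
    (hfbar₁ : IsColinear k O ρV₁ (diagCoact k O ρW₁) fbar₁)
    (hfbar₁range : LinearMap.range fbar₁ ≤
      LinearMap.range (LinearMap.lTensor W₁ A.toSubmodule.subtype))
    (hfbar₁f : (counitMap k O) ∘ₗ fbar₁ = f₁) :
    -- (ii) `g ∘ f` corresponds to `(id_Z ⊗ m_A) ∘ (ḡ ⊗ id_A) ∘ f̄`
    (IsColinear k O ρV (diagCoact k O ρZ)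
        ((multMap k O Z) ∘ₗ (LinearMap.rTensor O gbar) ∘ₗ fbar) ∧
      LinearMap.range ((multMap k O Z) ∘ₗ (LinearMap.rTensor O gbar) ∘ₗ fbar) ≤
        LinearMap.range (LinearMap.lTensor Z A.toSubmodule.subtype) ∧
      (counitMap k O) ∘ₗ ((multMap k O Z) ∘ₗ (LinearMap.rTensor O gbar) ∘ₗ fbar) =
        g ∘ₗ f) ∧
    -- (iii) `f₀ ⊗ f₁` is `L`-colinear for the diagonal coactions and corresponds to
    -- `(id ⊗ m_A) ∘ τ₍₂₃₎ ∘ (f̄₀ ⊗ f̄₁)`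
    (IsColinear k L (resCoact k O L q (tensorCoact k O ρV₀ ρV₁))
        (resCoact k O L q (tensorCoact k O ρW₀ ρW₁)) (TensorProduct.map f₀ f₁) ∧
      IsColinear k O (tensorCoact k O ρV₀ ρV₁) (diagCoact k O (tensorCoact k O ρW₀ ρW₁))
        ((TensorProduct.map (LinearMap.id : W₀ ⊗[k] W₁ →ₗ[k] W₀ ⊗[k] W₁) (LinearMap.mul' k O)) ∘ₗ
          (TensorProduct.tensorTensorTensorComm k W₀ O W₁ O).toLinearMap ∘ₗ
            (TensorProduct.map fbar₀ fbar₁)) ∧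
      LinearMap.range
          ((TensorProduct.map (LinearMap.id : W₀ ⊗[k] W₁ →ₗ[k] W₀ ⊗[k] W₁) (LinearMap.mul' k O)) ∘ₗ
            (TensorProduct.tensorTensorTensorComm k W₀ O W₁ O).toLinearMap ∘ₗ
              (TensorProduct.map fbar₀ fbar₁)) ≤
        LinearMap.range (LinearMap.lTensor (W₀ ⊗[k] W₁) A.toSubmodule.subtype) ∧
      (counitMap k O) ∘ₗ
          ((TensorProduct.map (LinearMap.id : W₀ ⊗[k] W₁ →ₗ[k] W₀ ⊗[k] W₁) (LinearMap.mul' k O)) ∘ₗ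
            (TensorProduct.tensorTensorTensorComm k W₀ O W₁ O).toLinearMap ∘ₗ
              (TensorProduct.map fbar₀ fbar₁)) =
        TensorProduct.map f₀ f₁) := by
  refine ⟨⟨?_, ?_, ?_⟩, ?_, ?_, ?_, ?_⟩
  · exact (hfbar.comp (hgbar.tensorMap (isColinear_id _))).comp (multMap_isColinear ρZ)
  · exact range_multMap_comp_le A hfbarrange hgbarrange
  · exact counitMap_comp_multMap_comp hfbarf hgbarg
  · rw [resCoact_tensorCoact, resCoact_tensorCoact]
    exact hf₀.tensorMap hf₁
  · exact (hfbar₀.tensorMap hfbar₁).comp (tensorMul_isColinear ρW₀ ρW₁)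
  · exact range_tensorMul_comp_map_le A hfbar₀range hfbar₁range
  · exact counitMap_comp_tensorMul_comp_map hfbar₀f hfbar₁f

open PaperQuotient in
/-- Under the bijection `F ↦ (id ⊗ ε) ∘ F` between `O`-colinear maps
`V → W ⊗ A` and `L`-colinear maps `V → W`: (ii) composition corresponds to
`(id ⊗ m_A) ∘ (ḡ ⊗ id_A) ∘ f̄`, and (iii) tensor product corresponds to
`(id ⊗ m_A) ∘ τ₍₂₃₎ ∘ (f̄₀ ⊗ f̄₁)`. -/
theorem statement10
    (k : Type) [Field k] (O : Type) [CommRing O] [HopfAlgebra k O]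
    (A : Subalgebra k O) (hA : IsHopfSub k O A)
    (L : Type) [CommRing L] [HopfAlgebra k L]
    (q : O →ₐc[k] L) (hq : IsQuotientHopf k O L A q)
    -- data for (ii)
    (V : Type) [AddCommGroup V] [Module k V]
    (ρV : V →ₗ[k] V ⊗[k] O) (hV : IsComod k O ρV)
    (W : Type) [AddCommGroup W] [Module k W]
    (ρW : W →ₗ[k] W ⊗[k] O) (hW : IsComod k O ρW)
    (Z : Type) [AddCommGroup Z] [Module k Z]
    (ρZ : Z →ₗ[k] Z ⊗[k] O) (hZ : IsComod k O ρZ)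
    (f : V →ₗ[k] W) (hf : IsColinear k L (resCoact k O L q ρV) (resCoact k O L q ρW) f)
    (g : W →ₗ[k] Z) (hg : IsColinear k L (resCoact k O L q ρW) (resCoact k O L q ρZ) g)
    (fbar : V →ₗ[k] W ⊗[k] O)
    (hfbar : IsColinear k O ρV (diagCoact k O ρW) fbar)
    (hfbarrange : LinearMap.range fbar ≤
      LinearMap.range (LinearMap.lTensor W A.toSubmodule.subtype))
    (hfbarf : (counitMap k O) ∘ₗ fbar = f)
    (gbar : W →ₗ[k] Z ⊗[k] O)
    (hgbar : IsColinear k O ρW (diagCoact k O ρZ) gbar)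
    (hgbarrange : LinearMap.range gbar ≤
      LinearMap.range (LinearMap.lTensor Z A.toSubmodule.subtype))
    (hgbarg : (counitMap k O) ∘ₗ gbar = g)
    -- data for (iii)
    (V₀ : Type) [AddCommGroup V₀] [Module k V₀]
    (ρV₀ : V₀ →ₗ[k] V₀ ⊗[k] O) (hV₀ : IsComod k O ρV₀)
    (V₁ : Type) [AddCommGroup V₁] [Module k V₁]
    (ρV₁ : V₁ →ₗ[k] V₁ ⊗[k] O) (hV₁ : IsComod k O ρV₁)
    (W₀ : Type) [AddCommGroup W₀] [Module k W₀]
    (ρW₀ : W₀ →ₗ[k] W₀ ⊗[k] O) (hW₀ : IsComod k O ρW₀)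
    (W₁ : Type) [AddCommGroup W₁] [Module k W₁]
    (ρW₁ : W₁ →ₗ[k] W₁ ⊗[k] O) (hW₁ : IsComod k O ρW₁)
    (f₀ : V₀ →ₗ[k] W₀)
    (hf₀ : IsColinear k L (resCoact k O L q ρV₀) (resCoact k O L q ρW₀) f₀)
    (f₁ : V₁ →ₗ[k] W₁)
    (hf₁ : IsColinear k L (resCoact k O L q ρV₁) (resCoact k O L q ρW₁) f₁)
    (fbar₀ : V₀ →ₗ[k] W₀ ⊗[k] O)
    (hfbar₀ : IsColinear k O ρV₀ (diagCoact k O ρW₀) fbar₀)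
    (hfbar₀range : LinearMap.range fbar₀ ≤
      LinearMap.range (LinearMap.lTensor W₀ A.toSubmodule.subtype))
    (hfbar₀f : (counitMap k O) ∘ₗ fbar₀ = f₀)
    (fbar₁ : V₁ →ₗ[k] W₁ ⊗[k] O)
    (hfbar₁ : IsColinear k O ρV₁ (diagCoact k O ρW₁) fbar₁)
    (hfbar₁range : LinearMap.range fbar₁ ≤
      LinearMap.range (LinearMap.lTensor W₁ A.toSubmodule.subtype))
    (hfbar₁f : (counitMap k O) ∘ₗ fbar₁ = f₁) :
    -- (ii) `g ∘ f` corresponds to `(id_Z ⊗ m_A) ∘ (ḡ ⊗ id_A) ∘ f̄`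
    (IsColinear k O ρV (diagCoact k O ρZ)
        ((multMap k O Z) ∘ₗ (LinearMap.rTensor O gbar) ∘ₗ fbar) ∧
      LinearMap.range ((multMap k O Z) ∘ₗ (LinearMap.rTensor O gbar) ∘ₗ fbar) ≤
        LinearMap.range (LinearMap.lTensor Z A.toSubmodule.subtype) ∧
      (counitMap k O) ∘ₗ ((multMap k O Z) ∘ₗ (LinearMap.rTensor O gbar) ∘ₗ fbar) =
        g ∘ₗ f) ∧
    -- (iii) `f₀ ⊗ f₁` is `L`-colinear for the diagonal coactions and corresponds to
    -- `(id ⊗ m_A) ∘ τ₍₂₃₎ ∘ (f̄₀ ⊗ f̄₁)`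
    (IsColinear k L (resCoact k O L q (tensorCoact k O ρV₀ ρV₁))
        (resCoact k O L q (tensorCoact k O ρW₀ ρW₁)) (TensorProduct.map f₀ f₁) ∧
      IsColinear k O (tensorCoact k O ρV₀ ρV₁) (diagCoact k O (tensorCoact k O ρW₀ ρW₁))
        ((TensorProduct.map (LinearMap.id : W₀ ⊗[k] W₁ →ₗ[k] W₀ ⊗[k] W₁) (LinearMap.mul' k O)) ∘ₗ
          (TensorProduct.tensorTensorTensorComm k W₀ O W₁ O).toLinearMap ∘ₗ
            (TensorProduct.map fbar₀ fbar₁)) ∧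
      LinearMap.range
          ((TensorProduct.map (LinearMap.id : W₀ ⊗[k] W₁ →ₗ[k] W₀ ⊗[k] W₁) (LinearMap.mul' k O)) ∘ₗ
            (TensorProduct.tensorTensorTensorComm k W₀ O W₁ O).toLinearMap ∘ₗ
              (TensorProduct.map fbar₀ fbar₁)) ≤
        LinearMap.range (LinearMap.lTensor (W₀ ⊗[k] W₁) A.toSubmodule.subtype) ∧
      (counitMap k O) ∘ₗ
          ((TensorProduct.map (LinearMap.id : W₀ ⊗[k] W₁ →ₗ[k] W₀ ⊗[k] W₁) (LinearMap.mul' k O)) ∘ₗ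
            (TensorProduct.tensorTensorTensorComm k W₀ O W₁ O).toLinearMap ∘ₗ
              (TensorProduct.map fbar₀ fbar₁)) =
        TensorProduct.map f₀ f₁) :=
  statement10_general k O A L q V ρV W ρW Z ρZ f g fbar hfbar hfbarrange hfbarf gbar hgbar
    hgbarrange hgbarg V₀ ρV₀ V₁ ρV₁ W₀ ρW₀ W₁ ρW₁ f₀ hf₀ f₁ hf₁ fbar₀ hfbar₀ hfbar₀range hfbar₀f
    fbar₁ hfbar₁ hfbar₁range hfbar₁f
end

section
/- Let T be a rigid tensor abelian category over k and let (Q, 𝔮) be a base change of T to K, i.e. a normal K-quotient whose invariant subcategory consists precisely of the trivial objects of T. Then for all objects X, Y of T the K-linear map Hom_T(X, Y) ⊗_k K → Hom_Q(𝔮(X), 𝔮(Y)) sending f ⊗ λ to λ·𝔮(f) is bijective; here Hom_Q(𝔮(X), 𝔮(Y)) is a K-vector space via the ring isomorphism K ≅ End_Q(1_Q). -/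
open CategoryTheory CategoryTheory.Limits CategoryTheory.MonoidalCategory

attribute [instance] CategoryTheory.Abelian.hasFiniteBiproducts

namespace PaperQuotientCat

universe v u v₂ u₂

/-- An object of a monoidal additive category is *trivial* if it is isomorphic to a
finite direct sum of copies of the unit object. -/
def IsTrivial {C : Type u} [Category.{v} C] [Preadditive C] [HasFiniteBiproducts C]
    [MonoidalCategory C] (X : C) : Prop :=
  ∃ n : ℕ, Nonempty (X ≅ ⨁ (fun _ : Fin n => 𝟙_ C))

/-- The axioms making `C` a rigid tensor abelian category over the field `k`:
the endomorphism ring of the unit object is `k`, and all objects have finite length. -/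
structure IsRigidTensorAbelianOver (k : Type*) [Field k] (C : Type u) [Category.{v} C]
    [Abelian C] [Linear k C] [MonoidalCategory C] [MonoidalPreadditive C]
    [MonoidalLinear k C] [SymmetricCategory C] [RigidCategory C] : Prop where
  endOne_bij : Function.Bijective (fun c : k => c • (𝟙 (𝟙_ C)))
  finiteLength : ∀ X : C, ∃ n : ℕ, ∀ f : Fin (n + 1) → Subobject X, ¬ StrictMono f

/-- A normal `K`-quotient `𝔮 : T ⟶ Q` of a rigid tensor abelian category `T` over `k`:
an exact `k`-linear tensor functor such that (i) the largest trivial subobject of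
`𝔮(X)` is the image of a subobject of `X`, and (ii) every object of `Q` embeds into,
and is a quotient of, an object coming from `T`. -/
structure NormalQuotient (k : Type*) [Field k] (K : Type*) [Field K] [Algebra k K]
    (T : Type u) [Category.{v} T] [Abelian T] [Linear k T] [MonoidalCategory T]
    [MonoidalPreadditive T] [MonoidalLinear k T] [SymmetricCategory T] [RigidCategory T]
    (Q : Type u₂) [Category.{v₂} Q] [Abelian Q] [Linear K Q] [MonoidalCategory Q]
    [MonoidalPreadditive Q] [MonoidalLinear K Q] [SymmetricCategory Q]
    [RigidCategory Q] where
  /-- the quotient functor -/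
  F : T ⥤ Q
  /-- `F` is a tensor functor compatible with the symmetries -/
  [braided : F.Braided]
  /-- `F` is additive -/
  additive : F.Additive
  /-- `F` is `k`-linear (with `Q` a `k`-linear category via `k ⊆ K`) -/
  klinear : ∀ (X Y : T) (c : k) (f : X ⟶ Y),
    F.map (c • f) = (algebraMap k K c) • F.map f
  /-- `F` is exact -/
  preservesLimits : PreservesFiniteLimits F
  preservesColimits : PreservesFiniteColimits F
  /-- (i): the largest trivial subobject of `F.obj X` is the image of a subobject of `X` -/
  maxTrivial : ∀ X : T, ∃ (X' : T) (ι : X' ⟶ X), Mono ι ∧ IsTrivial (F.obj X') ∧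
    Mono (F.map ι) ∧
    ∀ (Z : Q) (g : Z ⟶ F.obj X), Mono g → IsTrivial Z → ∃ h : Z ⟶ F.obj X', h ≫ F.map ι = g
  /-- (ii): every object of `Q` is a subobject of an image object ... -/
  sub : ∀ U : Q, ∃ (X : T) (m : U ⟶ F.obj X), Mono m
  /-- ... and a quotient of an image object -/
  quot : ∀ U : Q, ∃ (Y : T) (e : F.obj Y ⟶ U), Epi e

attribute [instance] NormalQuotient.braided

end PaperQuotientCat


namespace Statement12Proof

open PaperQuotientCat TensorProduct

universe v u v₂ u₂

set_option linter.unusedSectionVars false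

variable {k : Type} [Field k] {K : Type} [Field K] [Algebra k K]
    {T : Type u} [Category.{v} T] [Abelian T] [Linear k T] [MonoidalCategory T]
    [MonoidalPreadditive T] [MonoidalLinear k T] [SymmetricCategory T] [RigidCategory T]
    {Q : Type u₂} [Category.{v₂} Q] [Abelian Q] [Linear K Q] [MonoidalCategory Q]
    [MonoidalPreadditive Q] [MonoidalLinear K Q] [SymmetricCategory Q] [RigidCategory Q]

variable (nq : NormalQuotient k K T Q)

/-- The canonical additive map `Hom_T(X,Y) ⊗ K →+ Hom_Q(FX,FY)`, `f ⊗ c ↦ c • F f`. -/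
noncomputable def phi (X Y : T) : ((X ⟶ Y) ⊗[k] K) →+ (nq.F.obj X ⟶ nq.F.obj Y) :=
  TensorProduct.liftAddHom
    { toFun := fun f =>
        { toFun := fun c => c • nq.F.map f
          map_zero' := zero_smul _ _
          map_add' := fun c c' => add_smul c c' _ }
      map_zero' := by
        haveI := nq.additive
        ext c
        simp
      map_add' := fun f g => by
        haveI := nq.additive
        ext c
        simp [smul_add] }
    (fun a f c => by
      simp only [AddMonoidHom.coe_mk, ZeroHom.coe_mk]
      rw [nq.klinear, smul_smul, Algebra.smul_def, mul_comm])

@[simp]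
lemma phi_tmul (X Y : T) (f : X ⟶ Y) (c : K) :
    phi nq X Y (f ⊗ₜ[k] c) = c • nq.F.map f := rfl

/-- Post-composition with `ν` as a `k`-linear map on Hom. -/
def pc {X A B : T} (ν : A ⟶ B) : (X ⟶ A) →ₗ[k] (X ⟶ B) where
  toFun f := f ≫ ν
  map_add' := by simp
  map_smul' := by simp

@[simp] lemma pc_apply {X A B : T} (ν : A ⟶ B) (f : X ⟶ A) : pc (k := k) ν f = f ≫ ν := rfl

lemma phi_comp {X A B : T} (ν : A ⟶ B) (t : ((X ⟶ A) ⊗[k] K)) :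
    phi nq X B (LinearMap.rTensor K (pc ν) t) = phi nq X A t ≫ nq.F.map ν := by
  induction t using TensorProduct.induction_on with
  | zero => simp
  | tmul f c =>
    rw [LinearMap.rTensor_tmul]
    simp only [pc_apply, phi_tmul, nq.F.map_comp, Linear.smul_comp]
  | add s t hs ht => simp [map_add, hs, ht, Preadditive.add_comp]

lemma rT_comp {X A B C : T} (ν : A ⟶ B) (ν' : B ⟶ C) (t : ((X ⟶ A) ⊗[k] K)) :
    LinearMap.rTensor K (pc ν') (LinearMap.rTensor K (pc ν) t)
      = LinearMap.rTensor K (pc (ν ≫ ν')) t := by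
  induction t using TensorProduct.induction_on with
  | zero => simp
  | tmul f c => simp
  | add s t hs ht => simp [map_add, hs, ht]


/-- "good" objects: those for which the canonical map from the unit is bijective. -/
def good (A : T) : Prop := Function.Bijective (phi nq (𝟙_ T) A)

lemma rT_decomp {n : ℕ} (A : Fin n → T) (s : ((𝟙_ T ⟶ ⨁ A) ⊗[k] K)) :
    s = ∑ i, LinearMap.rTensor K (pc (biproduct.ι A i))
      (LinearMap.rTensor K (pc (biproduct.π A i)) s) := by
  have : ∀ i, ∀ s : ((𝟙_ T ⟶ ⨁ A) ⊗[k] K),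
      LinearMap.rTensor K (pc (biproduct.ι A i)) (LinearMap.rTensor K (pc (biproduct.π A i)) s)
        = LinearMap.rTensor K (pc (biproduct.π A i ≫ biproduct.ι A i)) s :=
    fun i s => rT_comp _ _ _
  simp only [this]
  induction s using TensorProduct.induction_on with
  | zero => simp
  | tmul f c =>
    simp only [LinearMap.rTensor_tmul, pc_apply]
    rw [← TensorProduct.sum_tmul]
    congr 1
    rw [← Preadditive.comp_sum, biproduct.total, Category.comp_id]
  | add s t hs ht =>
    simp only [map_add]
    rw [Finset.sum_add_distrib, ← hs, ← ht]

lemma good_biproduct {n : ℕ} (A : Fin n → T) (hA : ∀ i, good nq (A i)) : good nq (⨁ A) := by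
  haveI := nq.additive
  constructor
  · intro t t' h
    rw [rT_decomp A t, rT_decomp A t']
    congr 1
    funext i
    congr 1
    refine (hA i).1 ?_
    rw [phi_comp, phi_comp, h]
  · intro g
    choose s hs using fun i => (hA i).2 (g ≫ nq.F.map (biproduct.π A i))
    refine ⟨∑ i, LinearMap.rTensor K (pc (biproduct.ι A i)) (s i), ?_⟩
    rw [map_sum]
    simp only [phi_comp, hs]
    simp only [Category.assoc, ← nq.F.map_comp]
    rw [← Preadditive.comp_sum, ← nq.F.map_sum, biproduct.total, nq.F.map_id, Category.comp_id]


lemma rT_id {X A : T} (t : ((X ⟶ A) ⊗[k] K)) :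
    LinearMap.rTensor K (pc (𝟙 A)) t = t := by
  induction t using TensorProduct.induction_on with
  | zero => simp
  | tmul f c => simp
  | add s t hs ht => simp [map_add, hs, ht]

lemma good_of_iso {A B : T} (e : A ≅ B) (h : good nq A) : good nq B := by
  constructor
  · intro t t' htt
    have key : ∀ s : ((𝟙_ T ⟶ B) ⊗[k] K),
        LinearMap.rTensor K (pc e.hom) (LinearMap.rTensor K (pc e.inv) s) = s := by
      intro s
      rw [rT_comp, Iso.inv_hom_id, rT_id]
    rw [← key t, ← key t']
    congr 1
    refine h.1 ?_
    rw [phi_comp, phi_comp, htt]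
  · intro g
    obtain ⟨s, hs⟩ := h.2 (g ≫ nq.F.map e.inv)
    refine ⟨LinearMap.rTensor K (pc e.hom) s, ?_⟩
    rw [phi_comp, hs, Category.assoc, ← nq.F.map_comp, Iso.inv_hom_id, nq.F.map_id,
      Category.comp_id]

lemma good_unit (hT : IsRigidTensorAbelianOver k T) (hQ : IsRigidTensorAbelianOver K Q) :
    good nq (𝟙_ T) := by
  have key : ∀ t : ((𝟙_ T ⟶ 𝟙_ T) ⊗[k] K), ∃ c : K, t = 𝟙 (𝟙_ T) ⊗ₜ[k] c := by
    intro t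
    induction t using TensorProduct.induction_on with
    | zero => exact ⟨0, by simp [TensorProduct.tmul_zero]⟩
    | tmul f c =>
      obtain ⟨a, ha⟩ := hT.endOne_bij.2 f
      exact ⟨a • c, by rw [← ha, TensorProduct.smul_tmul]⟩
    | add s t hs ht =>
      obtain ⟨c, rfl⟩ := hs
      obtain ⟨c', rfl⟩ := ht
      exact ⟨c + c', by rw [TensorProduct.tmul_add]⟩
  set e : 𝟙_ Q ≅ nq.F.obj (𝟙_ T) := Functor.Monoidal.εIso nq.F with he
  have conj : ∀ c : K, e.hom ≫ (c • 𝟙 (nq.F.obj (𝟙_ T))) ≫ e.inv = c • 𝟙 (𝟙_ Q) := by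
    intro c
    simp
  constructor
  · intro t t' htt
    obtain ⟨c, rfl⟩ := key t
    obtain ⟨c', rfl⟩ := key t'
    suffices hcc : c = c' by rw [hcc]
    apply hQ.endOne_bij.1
    simp only []
    rw [← conj c, ← conj c']
    simp only [phi_tmul, nq.F.map_id] at htt
    rw [htt]
  · intro g
    obtain ⟨c, hc⟩ := hQ.endOne_bij.2 (e.hom ≫ g ≫ e.inv)
    refine ⟨𝟙 (𝟙_ T) ⊗ₜ[k] c, ?_⟩
    rw [phi_tmul, nq.F.map_id]
    have : g = e.inv ≫ (e.hom ≫ g ≫ e.inv) ≫ e.hom := by simp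
    rw [this, ← hc]
    simp

/-- Any object is isomorphic to the biproduct of itself indexed by `Fin 1`. -/
noncomputable def singleBiproductIso (C : Type*) [Category C] [Preadditive C]
    [HasFiniteBiproducts C] (Z : C) : Z ≅ ⨁ (fun _ : Fin 1 => Z) where
  hom := biproduct.lift fun _ => 𝟙 Z
  inv := biproduct.π _ 0
  hom_inv_id := biproduct.lift_π _ _
  inv_hom_id := by
    ext j
    have : j = 0 := Subsingleton.elim _ _
    subst this
    simp

lemma isTrivial_unitF : IsTrivial (nq.F.obj (𝟙_ T)) :=
  ⟨1, ⟨(Functor.Monoidal.εIso nq.F).symm.trans (singleBiproductIso Q (𝟙_ Q))⟩⟩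

lemma good_of_trivial {A : T} (hT : IsRigidTensorAbelianOver k T)
    (hQ : IsRigidTensorAbelianOver K Q) (h : IsTrivial A) : good nq A := by
  obtain ⟨n, ⟨e⟩⟩ := h
  exact good_of_iso nq e.symm (good_biproduct nq _ fun _ => good_unit nq hT hQ)


lemma isZero_of_isZero_map (hQ : IsRigidTensorAbelianOver K Q)
    (hbase : ∀ X : T, IsTrivial (nq.F.obj X) ↔ IsTrivial X)
    {C : T} (h : IsZero (nq.F.obj C)) : IsZero C := by
  have hzQ : IsZero (⨁ (fun _ : Fin 0 => (𝟙_ Q))) := by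
    rw [IsZero.iff_id_eq_zero]
    apply biproduct.hom_ext
    intro j
    exact j.elim0
  have htriv : IsTrivial (nq.F.obj C) := ⟨0, ⟨h.iso hzQ⟩⟩
  obtain ⟨n, ⟨e⟩⟩ := (hbase C).mp htriv
  match n, e with
  | 0, e =>
    have hzT : IsZero (⨁ (fun _ : Fin 0 => (𝟙_ T))) := by
      rw [IsZero.iff_id_eq_zero]
      apply biproduct.hom_ext
      intro j
      exact j.elim0
    exact hzT.of_iso e
  | (m+1), e =>
    exfalso
    set r : 𝟙_ T ⟶ C := biproduct.ι (fun _ : Fin (m+1) => (𝟙_ T)) 0 ≫ e.inv with hr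
    set s : C ⟶ 𝟙_ T := e.hom ≫ biproduct.π (fun _ : Fin (m+1) => (𝟙_ T)) 0 with hs
    have hrs : r ≫ s = 𝟙 (𝟙_ T) := by
      rw [hr, hs, Category.assoc, Iso.inv_hom_id_assoc]
      simp
    have hFrs : nq.F.map r ≫ nq.F.map s = 𝟙 _ := by
      rw [← nq.F.map_comp, hrs, nq.F.map_id]
    rw [h.eq_zero_of_tgt (nq.F.map r), zero_comp] at hFrs
    set eI : 𝟙_ Q ≅ nq.F.obj (𝟙_ T) := Functor.Monoidal.εIso nq.F
    have h1 : 𝟙 (𝟙_ Q) = 0 := by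
      have : 𝟙 (𝟙_ Q) = eI.hom ≫ 𝟙 (nq.F.obj (𝟙_ T)) ≫ eI.inv := by simp
      rw [this, ← hFrs]
      simp
    have h10 : (1 : K) • 𝟙 (𝟙_ Q) = (0 : K) • 𝟙 (𝟙_ Q) := by
      rw [h1]
      simp
    exact one_ne_zero (hQ.endOne_bij.1 h10)

lemma exists_nu (hQ : IsRigidTensorAbelianOver K Q)
    (hbase : ∀ X : T, IsTrivial (nq.F.obj X) ↔ IsTrivial X) (Y : T) :
    ∃ (X' : T) (ν : X' ⟶ Y), IsTrivial X' ∧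
      (∀ f : 𝟙_ T ⟶ Y, ∃ μ : 𝟙_ T ⟶ X', μ ≫ ν = f) ∧
      (∀ g : nq.F.obj (𝟙_ T) ⟶ nq.F.obj Y,
        ∃ h : nq.F.obj (𝟙_ T) ⟶ nq.F.obj X', h ≫ nq.F.map ν = g) := by
  haveI := nq.additive
  haveI := nq.preservesLimits
  haveI := nq.preservesColimits
  obtain ⟨X', ι, hmono, htrivFX', hmonoFι, hprop⟩ := nq.maxTrivial ((𝟙_ T) ⊞ Y)
  refine ⟨X', ι ≫ biprod.snd, (hbase X').mp htrivFX', ?_, ?_⟩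
  · intro f
    set mf : 𝟙_ T ⟶ (𝟙_ T) ⊞ Y := biprod.lift (𝟙 _) f with hmf
    haveI : IsSplitMono mf := IsSplitMono.mk' ⟨biprod.fst, by simp [hmf]⟩
    haveI : Mono (nq.F.map mf) := inferInstance
    obtain ⟨h₀, hh₀⟩ := hprop _ (nq.F.map mf) inferInstance (isTrivial_unitF nq)
    have w : h₀ ≫ nq.F.map ι = 𝟙 _ ≫ nq.F.map mf := by rw [hh₀, Category.id_comp]
    set θ : nq.F.obj (𝟙_ T) ⟶ nq.F.obj (pullback ι mf) :=
      pullback.lift h₀ (𝟙 _) w ≫ (PreservesPullback.iso nq.F ι mf).inv with hθdef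
    have hθ : θ ≫ nq.F.map (pullback.snd ι mf) = 𝟙 _ := by
      rw [hθdef, Category.assoc, PreservesPullback.iso_inv_snd, pullback.lift_snd]
    haveI : IsSplitEpi (nq.F.map (pullback.snd ι mf)) := IsSplitEpi.mk' ⟨θ, hθ⟩
    have hcoker : IsZero (cokernel (pullback.snd ι mf)) := by
      apply isZero_of_isZero_map nq hQ hbase
      have hz : IsZero (cokernel (nq.F.map (pullback.snd ι mf))) := by
        rw [IsZero.iff_id_eq_zero, ← cancel_epi (cokernel.π (nq.F.map (pullback.snd ι mf)))]
        simp [cokernel.π_of_epi]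
      exact hz.of_iso (PreservesCokernel.iso nq.F _)
    haveI : Epi (pullback.snd ι mf) :=
      Abelian.epi_of_cokernel_π_eq_zero _ (hcoker.eq_zero_of_tgt _)
    haveI : IsIso (pullback.snd ι mf) := isIso_of_mono_of_epi _
    refine ⟨inv (pullback.snd ι mf) ≫ pullback.fst ι mf, ?_⟩
    rw [Category.assoc, ← Category.assoc (pullback.fst ι mf), pullback.condition,
      Category.assoc, IsIso.inv_hom_id_assoc, hmf, biprod.lift_snd]
  · intro g
    haveI : PreservesBinaryBiproducts nq.F := preservesBinaryBiproducts_of_preservesBiproducts _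
    set m : nq.F.obj (𝟙_ T) ⟶ nq.F.obj ((𝟙_ T) ⊞ Y) :=
      biprod.lift (𝟙 _) g ≫ (nq.F.mapBiprod _ _).inv with hmdef
    have hinvfst : (nq.F.mapBiprod (𝟙_ T) Y).inv ≫ nq.F.map biprod.fst = biprod.fst := by
      rw [Iso.inv_comp_eq, Functor.mapBiprod_hom, biprod.lift_fst]
    have hinvsnd : (nq.F.mapBiprod (𝟙_ T) Y).inv ≫ nq.F.map biprod.snd = biprod.snd := by
      rw [Iso.inv_comp_eq, Functor.mapBiprod_hom, biprod.lift_snd]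
    have hm1 : m ≫ nq.F.map biprod.fst = 𝟙 _ := by
      rw [hmdef, Category.assoc, hinvfst, biprod.lift_fst]
    have hm2 : m ≫ nq.F.map biprod.snd = g := by
      rw [hmdef, Category.assoc, hinvsnd, biprod.lift_snd]
    haveI : IsSplitMono m := IsSplitMono.mk' ⟨nq.F.map biprod.fst, hm1⟩
    obtain ⟨h, hh⟩ := hprop _ m inferInstance (isTrivial_unitF nq)
    refine ⟨h, ?_⟩
    rw [nq.F.map_comp, ← Category.assoc, hh, hm2]


lemma surjAll (hT : IsRigidTensorAbelianOver k T) (hQ : IsRigidTensorAbelianOver K Q)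
    (hbase : ∀ X : T, IsTrivial (nq.F.obj X) ↔ IsTrivial X) (Y : T) :
    Function.Surjective (phi nq (𝟙_ T) Y) := by
  obtain ⟨X', ν, htriv, _, hQfac⟩ := exists_nu nq hQ hbase Y
  intro g
  obtain ⟨h, hh⟩ := hQfac g
  obtain ⟨s, hs⟩ := (good_of_trivial nq hT hQ htriv).2 h
  exact ⟨LinearMap.rTensor K (pc ν) s, by rw [phi_comp, hs, hh]⟩

lemma injAll (hT : IsRigidTensorAbelianOver k T) (hQ : IsRigidTensorAbelianOver K Q)
    (hbase : ∀ X : T, IsTrivial (nq.F.obj X) ↔ IsTrivial X) (Y : T) :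
    Function.Injective (phi nq (𝟙_ T) Y) := by
  rw [injective_iff_map_eq_zero]
  intro t ht
  obtain ⟨X', ν, htriv, hTfac, _⟩ := exists_nu nq hQ hbase Y
  have hsurj : ∀ t : ((𝟙_ T ⟶ Y) ⊗[k] K), ∃ s, LinearMap.rTensor K (pc ν) s = t := by
    intro t
    induction t using TensorProduct.induction_on with
    | zero => exact ⟨0, map_zero _⟩
    | tmul f c =>
      obtain ⟨μ, hμ⟩ := hTfac f
      exact ⟨μ ⊗ₜ[k] c, by rw [LinearMap.rTensor_tmul, pc_apply, hμ]⟩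
    | add s t hs ht =>
      obtain ⟨a, rfl⟩ := hs
      obtain ⟨b, rfl⟩ := ht
      exact ⟨a + b, map_add _ _ _⟩
  obtain ⟨s, rfl⟩ := hsurj t
  haveI := nq.additive
  haveI := nq.preservesLimits
  have hcomp : phi nq (𝟙_ T) X' s ≫ nq.F.map ν = 0 := by rw [← phi_comp, ht]
  set c₀ : nq.F.obj (𝟙_ T) ⟶ kernel (nq.F.map ν) := kernel.lift (nq.F.map ν) _ hcomp with hc₀
  set b : nq.F.obj (𝟙_ T) ⟶ nq.F.obj (kernel ν) := c₀ ≫ inv (kernelComparison ν nq.F) with hbdef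
  have hb : b ≫ nq.F.map (kernel.ι ν) = phi nq (𝟙_ T) X' s := by
    rw [hbdef, Category.assoc, ← kernelComparison_comp_ι ν nq.F, IsIso.inv_hom_id_assoc,
      hc₀, kernel.lift_ι]
  obtain ⟨r, hr⟩ := surjAll nq hT hQ hbase (kernel ν) b
  have heq : phi nq (𝟙_ T) X' (LinearMap.rTensor K (pc (kernel.ι ν)) r)
      = phi nq (𝟙_ T) X' s := by
    rw [phi_comp, hr, hb]
  have hsκ : LinearMap.rTensor K (pc (kernel.ι ν)) r = s :=
    (good_of_trivial nq hT hQ htriv).1 heq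
  rw [← hsκ, rT_comp, kernel.condition]
  have hpc0 : pc (k := k) (X := 𝟙_ T) (0 : kernel ν ⟶ Y) = 0 := by
    apply LinearMap.ext
    intro f
    simp
  rw [hpc0, LinearMap.rTensor_zero, LinearMap.zero_apply]

lemma goodAll (hT : IsRigidTensorAbelianOver k T) (hQ : IsRigidTensorAbelianOver K Q)
    (hbase : ∀ X : T, IsTrivial (nq.F.obj X) ↔ IsTrivial X) (Y : T) :
    good nq Y :=
  ⟨injAll nq hT hQ hbase Y, surjAll nq hT hQ hbase Y⟩


section Pairing

open Functor.LaxMonoidal Functor.OplaxMonoidal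

variable {C : Type*} {D : Type*} [Category C] [Category D]
  [MonoidalCategory C] [MonoidalCategory D]

/-- A monoidal functor sends an exact pairing to an exact pairing. -/
def mapExactPairing (F : C ⥤ D) [F.Monoidal] (X Y : C) [ExactPairing X Y] :
    ExactPairing (F.obj X) (F.obj Y) where
  coevaluation' := ε F ≫ F.map (η_ X Y) ≫ δ F X Y
  evaluation' := μ F Y X ≫ F.map (ε_ X Y) ≫ η F
  coevaluation_evaluation' := by
    have h := Functor.OplaxMonoidal.associativity_inv (F := F) Y X Y
    have h2 : F.obj Y ◁ δ F X Y ≫ (α_ (F.obj Y) (F.obj X) (F.obj Y)).inv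
        = μ F Y (X ⊗ Y) ≫ F.map (α_ Y X Y).inv ≫ δ F (Y ⊗ X) Y ≫ δ F Y X ▷ F.obj Y := by
      rw [← h, Functor.Monoidal.μ_δ_assoc]
    have hmid : F.obj Y ◁ δ F X Y ≫ (α_ (F.obj Y) (F.obj X) (F.obj Y)).inv ≫
          μ F Y X ▷ F.obj Y
        = μ F Y (X ⊗ Y) ≫ F.map (α_ Y X Y).inv ≫ δ F (Y ⊗ X) Y := by
      rw [← Category.assoc, h2]
      simp only [Category.assoc, Functor.Monoidal.whiskerRight_δ_μ, Category.comp_id]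
    rw [MonoidalCategory.whiskerLeft_comp, MonoidalCategory.whiskerLeft_comp,
      MonoidalCategory.comp_whiskerRight, MonoidalCategory.comp_whiskerRight]
    simp only [Category.assoc]
    rw [reassoc_of% hmid]
    rw [Functor.LaxMonoidal.μ_natural_right_assoc]
    rw [Functor.OplaxMonoidal.δ_natural_left_assoc]
    rw [← Functor.map_comp_assoc, ← Functor.map_comp_assoc]
    simp only [Category.assoc]
    rw [ExactPairing.coevaluation_evaluation]
    rw [Functor.map_comp]
    simp only [Category.assoc]
    rw [← Functor.LaxMonoidal.right_unitality_assoc]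
    rw [← Functor.OplaxMonoidal.left_unitality]
  evaluation_coevaluation' := by
    have h := Functor.OplaxMonoidal.associativity (F := F) X Y X
    have h2 : δ F X Y ▷ F.obj X ≫ (α_ (F.obj X) (F.obj Y) (F.obj X)).hom
        = μ F (X ⊗ Y) X ≫ F.map (α_ X Y X).hom ≫ δ F X (Y ⊗ X) ≫ F.obj X ◁ δ F Y X := by
      rw [← h, Functor.Monoidal.μ_δ_assoc]
    have hmid : δ F X Y ▷ F.obj X ≫ (α_ (F.obj X) (F.obj Y) (F.obj X)).hom ≫
          F.obj X ◁ μ F Y X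
        = μ F (X ⊗ Y) X ≫ F.map (α_ X Y X).hom ≫ δ F X (Y ⊗ X) := by
      rw [← Category.assoc, h2]
      simp only [Category.assoc, Functor.Monoidal.whiskerLeft_δ_μ, Category.comp_id]
    rw [MonoidalCategory.whiskerLeft_comp, MonoidalCategory.whiskerLeft_comp,
      MonoidalCategory.comp_whiskerRight, MonoidalCategory.comp_whiskerRight]
    simp only [Category.assoc]
    rw [reassoc_of% hmid]
    rw [Functor.LaxMonoidal.μ_natural_left_assoc]
    rw [Functor.OplaxMonoidal.δ_natural_right_assoc]
    rw [← Functor.map_comp_assoc, ← Functor.map_comp_assoc]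
    simp only [Category.assoc]
    rw [ExactPairing.evaluation_coevaluation]
    rw [Functor.map_comp]
    simp only [Category.assoc]
    rw [← Functor.LaxMonoidal.left_unitality_assoc]
    rw [← Functor.OplaxMonoidal.right_unitality]

/-- `tensorRightHomEquiv` out of the unit, in coevaluation form. -/
lemma tensorRightHomEquiv_unit (A B Z : C) [ExactPairing A B] (g : A ⟶ Z) :
    (tensorRightHomEquiv (𝟙_ C) A B Z) ((λ_ A).hom ≫ g) = η_ A B ≫ (g ▷ B) := by
  dsimp [tensorRightHomEquiv]
  rw [MonoidalCategory.comp_whiskerRight, MonoidalCategory.id_whiskerLeft]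
  simp only [Category.assoc]
  rw [unitors_equal, Iso.inv_hom_id_assoc]
  have hco : (λ_ (A ⊗ B)).inv ≫ (α_ (𝟙_ C) A B).inv ≫ (λ_ A).hom ▷ B = 𝟙 (A ⊗ B) := by
    monoidal
  rw [reassoc_of% hco]

end Pairing


section Dual

variable (X Y : T)

/-- The `k`-linear map `Hom(X,Y) → Hom(𝟙, Y ⊗ Xᘁ)`. -/
noncomputable def jmap : (X ⟶ Y) →ₗ[k] (𝟙_ T ⟶ Y ⊗ (Xᘁ)) where
  toFun f := η_ X (Xᘁ) ≫ (f ▷ (Xᘁ))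
  map_add' f g := by
    rw [MonoidalPreadditive.add_whiskerRight, Preadditive.comp_add]
  map_smul' a f := by
    rw [MonoidalLinear.smul_whiskerRight, Linear.comp_smul, RingHom.id_apply]

lemma jmap_bijective : Function.Bijective (jmap (k := k) X Y) := by
  have key : ∀ f : X ⟶ Y,
      jmap (k := k) X Y f = (tensorRightHomEquiv (𝟙_ T) X (Xᘁ) Y) ((λ_ X).hom ≫ f) :=
    fun f => (tensorRightHomEquiv_unit X (Xᘁ) Y f).symm
  constructor
  · intro f f' h
    rw [key, key] at h
    have h2 := (tensorRightHomEquiv (𝟙_ T) X (Xᘁ) Y).injective h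
    rwa [cancel_epi] at h2
  · intro g
    refine ⟨(λ_ X).inv ≫ (tensorRightHomEquiv (𝟙_ T) X (Xᘁ) Y).symm g, ?_⟩
    rw [key, Iso.hom_inv_id_assoc, Equiv.apply_symm_apply]

/-- The corresponding map on the `Q` side. -/
noncomputable def PsiU : (nq.F.obj X ⟶ nq.F.obj Y) → (nq.F.obj (𝟙_ T) ⟶ nq.F.obj (Y ⊗ (Xᘁ))) :=
  fun g => nq.F.map (η_ X (Xᘁ)) ≫ Functor.OplaxMonoidal.δ nq.F X (Xᘁ) ≫
    (g ▷ nq.F.obj (Xᘁ)) ≫ Functor.LaxMonoidal.μ nq.F Y (Xᘁ)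

lemma PsiU_map (f : X ⟶ Y) :
    PsiU nq X Y (nq.F.map f) = nq.F.map (jmap (k := k) X Y f) := by
  unfold PsiU
  rw [Functor.LaxMonoidal.μ_natural_left, Functor.Monoidal.δ_μ_assoc, ← nq.F.map_comp]
  rfl

lemma PsiU_smul (c : K) (g : nq.F.obj X ⟶ nq.F.obj Y) :
    PsiU nq X Y (c • g) = c • PsiU nq X Y g := by
  unfold PsiU
  rw [MonoidalLinear.smul_whiskerRight]
  simp only [Linear.smul_comp, Linear.comp_smul]

lemma PsiU_add (g g' : nq.F.obj X ⟶ nq.F.obj Y) :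
    PsiU nq X Y (g + g') = PsiU nq X Y g + PsiU nq X Y g' := by
  unfold PsiU
  rw [MonoidalPreadditive.add_whiskerRight]
  simp only [Preadditive.add_comp, Preadditive.comp_add]

lemma PsiU_bijective : Function.Bijective (PsiU nq X Y) := by
  letI : ExactPairing (nq.F.obj X) (nq.F.obj (Xᘁ)) := mapExactPairing nq.F X (Xᘁ)
  have key : ∀ g : nq.F.obj X ⟶ nq.F.obj Y,
      PsiU nq X Y g = Functor.OplaxMonoidal.η nq.F ≫
        ((tensorRightHomEquiv (𝟙_ Q) (nq.F.obj X) (nq.F.obj (Xᘁ)) (nq.F.obj Y))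
          ((λ_ (nq.F.obj X)).hom ≫ g)) ≫ Functor.LaxMonoidal.μ nq.F Y (Xᘁ) := by
    intro g
    rw [tensorRightHomEquiv_unit]
    show nq.F.map (η_ X (Xᘁ)) ≫ Functor.OplaxMonoidal.δ nq.F X (Xᘁ) ≫
        (g ▷ nq.F.obj (Xᘁ)) ≫ Functor.LaxMonoidal.μ nq.F Y (Xᘁ)
      = Functor.OplaxMonoidal.η nq.F ≫
        ((Functor.LaxMonoidal.ε nq.F ≫ nq.F.map (η_ X (Xᘁ)) ≫
          Functor.OplaxMonoidal.δ nq.F X (Xᘁ)) ≫ (g ▷ nq.F.obj (Xᘁ))) ≫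
        Functor.LaxMonoidal.μ nq.F Y (Xᘁ)
    simp only [Category.assoc, Functor.Monoidal.η_ε_assoc]
  constructor
  · intro g g' h
    rw [key, key] at h
    have h2 := (cancel_epi (Functor.OplaxMonoidal.η nq.F)).mp h
    have h3 := (cancel_mono (Functor.LaxMonoidal.μ nq.F Y (Xᘁ))).mp h2
    have h4 := (tensorRightHomEquiv (𝟙_ Q) (nq.F.obj X) (nq.F.obj (Xᘁ))
      (nq.F.obj Y)).injective h3
    rwa [cancel_epi] at h4
  · intro h
    refine ⟨(λ_ (nq.F.obj X)).inv ≫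
      (tensorRightHomEquiv (𝟙_ Q) (nq.F.obj X) (nq.F.obj (Xᘁ)) (nq.F.obj Y)).symm
        (Functor.LaxMonoidal.ε nq.F ≫ h ≫ Functor.OplaxMonoidal.δ nq.F Y (Xᘁ)), ?_⟩
    rw [key, Iso.hom_inv_id_assoc, Equiv.apply_symm_apply]
    simp only [Category.assoc, Functor.Monoidal.η_ε_assoc, Functor.Monoidal.δ_μ,
      Category.comp_id]

lemma mainBij (hT : IsRigidTensorAbelianOver k T) (hQ : IsRigidTensorAbelianOver K Q)
    (hbase : ∀ X : T, IsTrivial (nq.F.obj X) ↔ IsTrivial X) :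
    Function.Bijective (phi nq X Y) := by
  haveI := nq.additive
  have square : ∀ t : ((X ⟶ Y) ⊗[k] K),
      phi nq (𝟙_ T) (Y ⊗ (Xᘁ)) (LinearMap.rTensor K (jmap (k := k) X Y) t)
        = PsiU nq X Y (phi nq X Y t) := by
    intro t
    induction t using TensorProduct.induction_on with
    | zero =>
      simp only [map_zero]
      unfold PsiU
      simp
    | tmul f c =>
      rw [LinearMap.rTensor_tmul, phi_tmul, phi_tmul, PsiU_smul, PsiU_map]
    | add s t hs ht =>
      simp only [map_add, PsiU_add, hs, ht]
  set e : (X ⟶ Y) ≃ₗ[k] (𝟙_ T ⟶ Y ⊗ (Xᘁ)) :=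
    LinearEquiv.ofBijective (jmap (k := k) X Y) (jmap_bijective X Y) with he
  set E := TensorProduct.congr e (LinearEquiv.refl k K) with hE
  have hEr : ∀ t, E t = LinearMap.rTensor K (jmap (k := k) X Y) t := by
    intro t
    induction t using TensorProduct.induction_on with
    | zero => simp
    | tmul f c => simp [hE, he, TensorProduct.congr_tmul, LinearEquiv.ofBijective_apply]
    | add s t hs ht => simp only [map_add, hs, ht]
  constructor
  · intro a b hab
    have h1 : PsiU nq X Y (phi nq X Y a) = PsiU nq X Y (phi nq X Y b) := by rw [hab]
    rw [← square, ← square] at h1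
    have h2 := (goodAll nq hT hQ hbase (Y ⊗ (Xᘁ))).1 h1
    rw [← hEr, ← hEr] at h2
    exact E.injective h2
  · intro g
    obtain ⟨s, hs⟩ := (goodAll nq hT hQ hbase (Y ⊗ (Xᘁ))).2 (PsiU nq X Y g)
    refine ⟨E.symm s, ?_⟩
    apply (PsiU_bijective nq X Y).1
    rw [← square, ← hEr, E.apply_symm_apply, hs]

end Dual

end Statement12Proof

open PaperQuotientCat TensorProduct in
/-- If `(Q, 𝔮)` is a base change of `T` to `K` (a normal `K`-quotient
whose invariant subcategory consists precisely of the trivial objects), then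
`Hom_T(X,Y) ⊗_k K → Hom_Q(𝔮X, 𝔮Y)`, `f ⊗ λ ↦ λ • 𝔮(f)`, is bijective. -/
theorem statement12 {k : Type} [Field k] {K : Type} [Field K] [Algebra k K]
    {T : Type u} [Category.{v} T] [Abelian T] [Linear k T] [MonoidalCategory T]
    [MonoidalPreadditive T] [MonoidalLinear k T] [SymmetricCategory T] [RigidCategory T]
    {Q : Type u₂} [Category.{v₂} Q] [Abelian Q] [Linear K Q] [MonoidalCategory Q]
    [MonoidalPreadditive Q] [MonoidalLinear K Q] [SymmetricCategory Q] [RigidCategory Q]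
    (hT : IsRigidTensorAbelianOver k T) (hQ : IsRigidTensorAbelianOver K Q)
    (nq : NormalQuotient k K T Q)
    -- the invariant subcategory consists precisely of the trivial objects of `T`
    (hbase : ∀ X : T, IsTrivial (nq.F.obj X) ↔ IsTrivial X) :
    ∀ X Y : T,
      ∃ Φ : ((X ⟶ Y) ⊗[k] K) → (nq.F.obj X ⟶ nq.F.obj Y),
        (∀ a b, Φ (a + b) = Φ a + Φ b) ∧
        (∀ (f : X ⟶ Y) (c : K), Φ (f ⊗ₜ[k] c) = c • nq.F.map f) ∧
        Function.Bijective Φ := by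
  intro X Y
  exact ⟨⇑(Statement12Proof.phi nq X Y),
    fun a b => map_add _ a b,
    fun f c => Statement12Proof.phi_tmul nq X Y f c,
    Statement12Proof.mainBij nq X Y hT hQ hbase⟩
end

section
/- Let O be a finite-dimensional commutative Hopf algebra over k which is separable as a k-algebra (equivalently étale over k, i.e. projective as a module over O ⊗_k O). Then the multiplication map m : O ⊗_k O → O admits a k-linear section s : O → O ⊗_k O (that is, m ∘ s = id_O) which is a map of O-bimodules, i.e. s(ab) = (a ⊗ 1)·s(b) = s(a)·(1 ⊗ b) for all a, b ∈ O, and which is colinear for the right regular coactions: (s ⊗ id_O) ∘ Δ = ρ ∘ s, where ρ : O ⊗_k O → O ⊗_k O ⊗_k O is the diagonal coaction a ⊗ b ↦ Σ a₍₁₎ ⊗ b₍₁₎ ⊗ a₍₂₎b₍₂₎. -/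
open TensorProduct

namespace Stmt15Aux

variable (k : Type) [Field k] (O : Type) [CommRing O] [HopfAlgebra k O]

/-- The multiplication map as an algebra hom. -/
noncomputable def mA : O ⊗[k] O →ₐ[k] O := Algebra.TensorProduct.lmul' k

/-- The diagonal coaction on `O ⊗ O` as an algebra hom. -/
noncomputable def P : (O ⊗[k] O) →ₐ[k] (O ⊗[k] O) ⊗[k] O :=
  ((Algebra.TensorProduct.map (AlgHom.id k (O ⊗[k] O)) (mA k O)).comp
    (Algebra.TensorProduct.tensorTensorTensorComm k k k k O O O O).toAlgHom).comp
    (Algebra.TensorProduct.map (Bialgebra.comulAlgHom k O) (Bialgebra.comulAlgHom k O))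

/-- `x ↦ x ⊗ 1`. -/
noncomputable def ι1 : O →ₗ[k] O ⊗[k] O := (TensorProduct.mk k O O).flip 1

/-- `x ↦ 1 ⊗ x`. -/
noncomputable def ι2 : O →ₗ[k] O ⊗[k] O := TensorProduct.mk k O O 1

noncomputable def g1 : O →ₗ[k] (O ⊗[k] O) ⊗[k] O :=
  (TensorProduct.map (ι1 k O) LinearMap.id) ∘ₗ Coalgebra.comul

noncomputable def g2 : O →ₗ[k] (O ⊗[k] O) ⊗[k] O :=
  (TensorProduct.map (ι2 k O) LinearMap.id) ∘ₗ Coalgebra.comul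

lemma Pg1 (x : O) : P k O (x ⊗ₜ[k] 1) = g1 k O x := by
  have h1 : Algebra.TensorProduct.map (Bialgebra.comulAlgHom k O) (Bialgebra.comulAlgHom k O)
      (x ⊗ₜ[k] (1 : O)) = (Coalgebra.comul x) ⊗ₜ[k] ((1 : O) ⊗ₜ[k] (1 : O)) := by
    simp [Algebra.TensorProduct.map_tmul, Bialgebra.comulAlgHom_apply, Bialgebra.comul_one,
      Algebra.TensorProduct.one_def]
  have h2 : ∀ w : O ⊗[k] O,
      (Algebra.TensorProduct.map (AlgHom.id k (O ⊗[k] O)) (mA k O))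
        ((Algebra.TensorProduct.tensorTensorTensorComm k k k k O O O O)
          (w ⊗ₜ[k] ((1 : O) ⊗ₜ[k] (1 : O)))) = TensorProduct.map (ι1 k O) LinearMap.id w := by
    intro w
    induction w using TensorProduct.induction_on with
    | zero => simp
    | tmul a b =>
        simp [Algebra.TensorProduct.tensorTensorTensorComm_tmul, mA,
          Algebra.TensorProduct.lmul'_apply_tmul, ι1]
    | add u v hu hv => simp [add_tmul, map_add, hu, hv]
  show _ = TensorProduct.map (ι1 k O) LinearMap.id (Coalgebra.comul x)
  rw [P]
  simp only [AlgHom.comp_apply, AlgEquiv.toAlgHom_eq_coe, AlgHom.coe_coe]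
  rw [h1]; exact h2 _

end Stmt15Aux

namespace Stmt15Aux

variable (k : Type) [Field k] (O : Type) [CommRing O] [HopfAlgebra k O]

lemma Pg2 (x : O) : P k O ((1 : O) ⊗ₜ[k] x) = g2 k O x := by
  have h1 : Algebra.TensorProduct.map (Bialgebra.comulAlgHom k O) (Bialgebra.comulAlgHom k O)
      ((1 : O) ⊗ₜ[k] x) = ((1 : O) ⊗ₜ[k] (1 : O)) ⊗ₜ[k] (Coalgebra.comul x) := by
    simp [Algebra.TensorProduct.map_tmul, Bialgebra.comulAlgHom_apply, Bialgebra.comul_one,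
      Algebra.TensorProduct.one_def]
  have h2 : ∀ w : O ⊗[k] O,
      (Algebra.TensorProduct.map (AlgHom.id k (O ⊗[k] O)) (mA k O))
        ((Algebra.TensorProduct.tensorTensorTensorComm k k k k O O O O)
          (((1 : O) ⊗ₜ[k] (1 : O)) ⊗ₜ[k] w)) = TensorProduct.map (ι2 k O) LinearMap.id w := by
    intro w
    induction w using TensorProduct.induction_on with
    | zero => simp
    | tmul a b =>
        simp [Algebra.TensorProduct.tensorTensorTensorComm_tmul, mA,
          Algebra.TensorProduct.lmul'_apply_tmul, ι2]
    | add u v hu hv => simp [tmul_add, map_add, hu, hv]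
  show _ = TensorProduct.map (ι2 k O) LinearMap.id (Coalgebra.comul x)
  rw [P]
  simp only [AlgHom.comp_apply, AlgEquiv.toAlgHom_eq_coe, AlgHom.coe_coe]
  rw [h1]; exact h2 _

/-- The key "sandwich" computation `∑ g (x₍₁₎) * (1 ⊗ S x₍₂₎) = (ι x) ⊗ 1` at map level,
for `g = (map ι id) ∘ comul` with `ι : O →ₗ O ⊗ O` any linear map. -/
lemma sandwich (ι : O →ₗ[k] O ⊗[k] O) (x : O) :
    LinearMap.mul' k ((O ⊗[k] O) ⊗[k] O)
      (TensorProduct.map ((TensorProduct.map ι LinearMap.id) ∘ₗ Coalgebra.comul)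
        ((TensorProduct.mk k (O ⊗[k] O) O 1) ∘ₗ HopfAlgebra.antipode k)
        (Coalgebra.comul x)) =
    (ι x) ⊗ₜ[k] (1 : O) := by
  set m := LinearMap.mul' k O with hm
  set S : O →ₗ[k] O := HopfAlgebra.antipode (R := k) with hS
  set Δ : O →ₗ[k] O ⊗[k] O := Coalgebra.comul (R := k) with hΔ
  set mk1 : O →ₗ[k] (O ⊗[k] O) ⊗[k] O := TensorProduct.mk k (O ⊗[k] O) O 1 with hmk1
  -- step 1 : factor the outer map
  have h1 : TensorProduct.map ((TensorProduct.map ι LinearMap.id) ∘ₗ Δ) (mk1 ∘ₗ S) (Δ x)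
      = TensorProduct.map (TensorProduct.map ι LinearMap.id) mk1
          (TensorProduct.map Δ S (Δ x)) := by
    have := LinearMap.congr_fun
      (TensorProduct.map_comp (TensorProduct.map ι (LinearMap.id : O →ₗ[k] O)) mk1 Δ S) (Δ x)
    rwa [LinearMap.comp_apply] at this
  -- step 2 : split map Δ S
  have h2 : TensorProduct.map Δ S (Δ x)
      = LinearMap.lTensor (O ⊗[k] O) S (LinearMap.rTensor O Δ (Δ x)) := by
    have := LinearMap.congr_fun (LinearMap.lTensor_comp_rTensor (f := Δ) (g := S)) (Δ x)
    rw [LinearMap.comp_apply] at this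
    exact this.symm
  -- step 3 : mult ∘ (map (map ι id) mk1) = (map ι m) ∘ assoc
  have h3 : ∀ w : (O ⊗[k] O) ⊗[k] O,
      LinearMap.mul' k ((O ⊗[k] O) ⊗[k] O)
        (TensorProduct.map (TensorProduct.map ι LinearMap.id) mk1 w)
      = TensorProduct.map ι m ((TensorProduct.assoc k O O O) w) := by
    intro w
    have := TensorProduct.ext_threefold (R := k)
      (g := (LinearMap.mul' k ((O ⊗[k] O) ⊗[k] O)) ∘ₗ
        TensorProduct.map (TensorProduct.map ι LinearMap.id) mk1)
      (h := (TensorProduct.map ι m) ∘ₗ (TensorProduct.assoc k O O O).toLinearMap)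
      (fun a b c => by
        simp [hmk1, hm, Algebra.TensorProduct.tmul_mul_tmul])
    exact LinearMap.congr_fun this w
  -- step 4 : assoc commutes with lTensor S
  have h4 : ∀ w : (O ⊗[k] O) ⊗[k] O,
      (TensorProduct.assoc k O O O) (LinearMap.lTensor (O ⊗[k] O) S w)
      = LinearMap.lTensor O (LinearMap.lTensor O S) ((TensorProduct.assoc k O O O) w) := by
    intro w
    have := TensorProduct.ext_threefold (R := k)
      (g := (TensorProduct.assoc k O O O).toLinearMap ∘ₗ LinearMap.lTensor (O ⊗[k] O) S)
      (h := LinearMap.lTensor O (LinearMap.lTensor O S) ∘ₗ (TensorProduct.assoc k O O O).toLinearMap)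
      (fun a b c => by simp)
    exact LinearMap.congr_fun this w
  -- step 5 : coassociativity
  have h5 : (TensorProduct.assoc k O O O) (LinearMap.rTensor O Δ (Δ x))
      = LinearMap.lTensor O Δ (Δ x) := Coalgebra.coassoc_apply x
  -- step 6 : split map ι m
  have h6 : ∀ w : O ⊗[k] (O ⊗[k] O), TensorProduct.map ι m w
      = LinearMap.rTensor O ι (LinearMap.lTensor O m w) := by
    intro w
    have := LinearMap.congr_fun (LinearMap.rTensor_comp_lTensor (f := ι) (g := m)) w
    rw [LinearMap.comp_apply] at this
    exact this.symm
  -- step 7 : Hopf algebra antipode axiom, under lTensor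
  have h7 : LinearMap.lTensor O m (LinearMap.lTensor O (LinearMap.lTensor O S)
        (LinearMap.lTensor O Δ (Δ x)))
      = LinearMap.lTensor O ((Algebra.linearMap k O) ∘ₗ Coalgebra.counit) (Δ x) := by
    rw [← LinearMap.comp_apply, ← LinearMap.lTensor_comp,
      ← LinearMap.comp_apply, ← LinearMap.lTensor_comp]
    rw [LinearMap.comp_assoc]
    rw [HopfAlgebra.mul_antipode_lTensor_comul (R := k) (A := O)]
  -- step 8 : counit axiom
  have h8 : LinearMap.lTensor O ((Algebra.linearMap k O) ∘ₗ Coalgebra.counit) (Δ x)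
      = x ⊗ₜ[k] (1 : O) := by
    rw [LinearMap.lTensor_comp, LinearMap.comp_apply, Coalgebra.lTensor_counit_comul]
    simp
  rw [h1, h2, h3, h4, h5, h6, h7, h8]
  simp [LinearMap.rTensor_tmul]

end Stmt15Aux

namespace Stmt15Aux

variable (k : Type) [Field k] (O : Type) [CommRing O] [HopfAlgebra k O]

lemma collapse1 (w : O ⊗[k] O) :
    Algebra.TensorProduct.map (mA k O) (AlgHom.id k O)
      (TensorProduct.map (ι1 k O) LinearMap.id w) = w := by
  induction w using TensorProduct.induction_on with
  | zero => simp
  | tmul a b => simp [ι1, mA, Algebra.TensorProduct.lmul'_apply_tmul]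
  | add u v hu hv => simp [map_add, hu, hv]

lemma collapse2 (w : O ⊗[k] O) :
    Algebra.TensorProduct.map (mA k O) (AlgHom.id k O)
      (TensorProduct.map (ι2 k O) LinearMap.id w) = w := by
  induction w using TensorProduct.induction_on with
  | zero => simp
  | tmul a b => simp [ι2, mA, Algebra.TensorProduct.lmul'_apply_tmul]
  | add u v hu hv => simp [map_add, hu, hv]

lemma MP (w : O ⊗[k] O) :
    Algebra.TensorProduct.map (mA k O) (AlgHom.id k O) (P k O w)
      = Bialgebra.comulAlgHom k O (mA k O w) := by
  have hext : (Algebra.TensorProduct.map (mA k O) (AlgHom.id k O)).comp (P k O)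
      = (Bialgebra.comulAlgHom k O).comp (mA k O) := by
    apply Algebra.TensorProduct.ext'
    intro a b
    have hab : a ⊗ₜ[k] b = (a ⊗ₜ[k] (1 : O)) * ((1 : O) ⊗ₜ[k] b) := by
      rw [Algebra.TensorProduct.tmul_mul_tmul, mul_one, one_mul]
    rw [AlgHom.comp_apply, AlgHom.comp_apply, hab, map_mul, map_mul, map_mul, map_mul,
      Pg1, Pg2]
    have h1 : mA k O (a ⊗ₜ[k] (1 : O)) = a := by
      simp [mA, Algebra.TensorProduct.lmul'_apply_tmul]
    have h2 : mA k O ((1 : O) ⊗ₜ[k] b) = b := by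
      simp [mA, Algebra.TensorProduct.lmul'_apply_tmul]
    rw [h1, h2]
    show _ * _ = Coalgebra.comul a * Coalgebra.comul b
    rw [g1, g2, LinearMap.comp_apply, LinearMap.comp_apply, collapse1, collapse2]
  exact AlgHom.congr_fun hext w

lemma mA_mul' (w : O ⊗[k] O) : mA k O w = LinearMap.mul' k O w := by
  rw [mA, ← Algebra.TensorProduct.lmul'_toLinearMap]; rfl

end Stmt15Aux


set_option maxHeartbeats 1000000 in
open PaperQuotient in
/-- A finite-dimensional commutative Hopf algebra `O` which is
separable as a `k`-algebra admits a section `s : O → O ⊗ O` of the multiplication map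
which is a map of `O`-bimodules and is colinear for the right regular coactions. -/
theorem statement15
    (k : Type) [Field k] (O : Type) [CommRing O] [HopfAlgebra k O]
    [FiniteDimensional k O]
    -- separability: there is a separability idempotent
    (hsep : ∃ e : O ⊗[k] O, LinearMap.mul' k O e = 1 ∧
      ∀ a : O, (a ⊗ₜ[k] (1 : O)) * e = e * ((1 : O) ⊗ₜ[k] a)) :
    ∃ s : O →ₗ[k] O ⊗[k] O,
      -- `s` is a section of the multiplication map
      (∀ x : O, LinearMap.mul' k O (s x) = x) ∧
      -- `s` is a map of `O`-bimodules
      (∀ a b : O, s (a * b) = (a ⊗ₜ[k] (1 : O)) * s b) ∧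
      (∀ a b : O, s (a * b) = s a * ((1 : O) ⊗ₜ[k] b)) ∧
      -- `s` is colinear for the right regular coactions:
      -- `(s ⊗ id) ∘ Δ = ρ ∘ s` with `ρ` the diagonal coaction on `O ⊗ O`
      (∀ x : O,
        (LinearMap.rTensor O s) (Coalgebra.comul (R := k) x) =
          (tensorCoact k O (Coalgebra.comul (R := k)) (Coalgebra.comul (R := k))) (s x)) := by

  classical
  obtain ⟨e, he1, he2⟩ := hsep
  have hcas : ∀ a : O, (a ⊗ₜ[k] (1 : O)) * e = ((1 : O) ⊗ₜ[k] a) * e := fun a => by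
    rw [he2 a, mul_comm]
  set s : O →ₗ[k] O ⊗[k] O :=
    LinearMap.mulRight k e ∘ₗ (TensorProduct.mk k O O).flip 1 with hs
  have hsx : ∀ x : O, s x = (x ⊗ₜ[k] (1 : O)) * e := fun x => rfl
  have hmAe : Stmt15Aux.mA k O e = 1 := by rw [Stmt15Aux.mA_mul']; exact he1
  refine ⟨s, ?_, ?_, ?_, ?_⟩
  · -- section of the multiplication
    intro x
    rw [hsx, ← Stmt15Aux.mA_mul', map_mul, hmAe, mul_one]
    simp [Stmt15Aux.mA, Algebra.TensorProduct.lmul'_apply_tmul]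
  · -- left O-linearity
    intro a b
    rw [hsx, hsx, ← mul_assoc, Algebra.TensorProduct.tmul_mul_tmul, mul_one]
  · -- right O-linearity
    intro a b
    rw [hsx, hsx, mul_assoc, ← he2 b, ← mul_assoc, Algebra.TensorProduct.tmul_mul_tmul, mul_one]
  · -- colinearity
    intro x
    set Pe := Stmt15Aux.P k O e with hPedef
    -- twisted Casimir relation for Pe
    have tw : ∀ a : O, Stmt15Aux.g1 k O a * Pe = Stmt15Aux.g2 k O a * Pe := by
      intro a
      have h := congrArg (Stmt15Aux.P k O) (hcas a)
      rw [map_mul, map_mul, Stmt15Aux.Pg1, Stmt15Aux.Pg2] at h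
      exact h
    -- genuine Casimir relation for Pe
    have casE : ∀ a : O,
        ((a ⊗ₜ[k] (1 : O)) ⊗ₜ[k] (1 : O)) * Pe
          = (((1 : O) ⊗ₜ[k] a) ⊗ₜ[k] (1 : O)) * Pe := by
      intro a
      have r := Coalgebra.Repr.arbitrary k a
      have hsum : ∀ f : O →ₗ[k] O ⊗[k] O,
          (f a) ⊗ₜ[k] (1 : O) = ∑ i ∈ r.index,
            ((TensorProduct.map f LinearMap.id ∘ₗ Coalgebra.comul) (r.left i)) *
              ((1 : O ⊗[k] O) ⊗ₜ[k] HopfAlgebra.antipode (R := k) (r.right i)) := by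
        intro f
        have h := Stmt15Aux.sandwich k O f a
        rw [← r.eq] at h
        simp only [map_sum, TensorProduct.map_tmul, LinearMap.mul'_apply,
          LinearMap.comp_apply, TensorProduct.mk_apply] at h
        exact h.symm
      have h1 : (a ⊗ₜ[k] (1 : O)) ⊗ₜ[k] (1 : O) = ∑ i ∈ r.index,
          Stmt15Aux.g1 k O (r.left i) *
            ((1 : O ⊗[k] O) ⊗ₜ[k] HopfAlgebra.antipode (R := k) (r.right i)) :=
        hsum (Stmt15Aux.ι1 k O)
      have h2 : ((1 : O) ⊗ₜ[k] a) ⊗ₜ[k] (1 : O) = ∑ i ∈ r.index,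
          Stmt15Aux.g2 k O (r.left i) *
            ((1 : O ⊗[k] O) ⊗ₜ[k] HopfAlgebra.antipode (R := k) (r.right i)) :=
        hsum (Stmt15Aux.ι2 k O)
      rw [h1, h2, Finset.sum_mul, Finset.sum_mul]
      refine Finset.sum_congr rfl fun i _ => ?_
      rw [mul_right_comm, tw (r.left i), mul_right_comm]
    -- the two halves of the uniqueness argument
    have eqA : Pe * (e ⊗ₜ[k] (1 : O)) = e ⊗ₜ[k] (1 : O) := by
      have C1 : ∀ w : (O ⊗[k] O) ⊗[k] O, w * (e ⊗ₜ[k] (1 : O)) =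
          (LinearMap.rTensor O (LinearMap.mulRight k e ∘ₗ Stmt15Aux.ι1 k O))
            (LinearMap.rTensor O (LinearMap.mul' k O) w) := by
        intro w
        induction w using TensorProduct.induction_on with
        | zero => simp
        | tmul u z =>
            induction u using TensorProduct.induction_on with
            | zero => simp
            | tmul p q =>
                simp only [Algebra.TensorProduct.tmul_mul_tmul, mul_one,
                  LinearMap.rTensor_tmul, LinearMap.mul'_apply, LinearMap.comp_apply,
                  LinearMap.mulRight_apply]
                congr 1
                have hpq : (p ⊗ₜ[k] q) = (p ⊗ₜ[k] (1 : O)) * ((1 : O) ⊗ₜ[k] q) := by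
                  rw [Algebra.TensorProduct.tmul_mul_tmul, mul_one, one_mul]
                rw [hpq, mul_assoc, ← hcas q, ← mul_assoc,
                  Algebra.TensorProduct.tmul_mul_tmul, mul_one]
                rfl
            | add u v hu hv =>
                simp only [add_tmul, add_mul, map_add, hu, hv]
        | add u v hu hv => simp only [add_mul, map_add, hu, hv]
      have hAlg : ∀ w : (O ⊗[k] O) ⊗[k] O,
          Algebra.TensorProduct.map (Stmt15Aux.mA k O) (AlgHom.id k O) w
            = LinearMap.rTensor O (LinearMap.mul' k O) w := by
        intro w
        induction w using TensorProduct.induction_on with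
        | zero => simp
        | tmul u z => simp [Stmt15Aux.mA_mul']
        | add u v hu hv => simp [map_add, hu, hv]
      have hMPe : LinearMap.rTensor O (LinearMap.mul' k O) Pe = (1 : O) ⊗ₜ[k] (1 : O) := by
        rw [← hAlg, hPedef, Stmt15Aux.MP, Stmt15Aux.mA_mul', he1]
        simp [Algebra.TensorProduct.one_def]
      rw [C1 Pe, hMPe]
      have : (LinearMap.mulRight k e ∘ₗ Stmt15Aux.ι1 k O) (1 : O) = e := by
        show ((1 : O) ⊗ₜ[k] (1 : O)) * e = e
        rw [← Algebra.TensorProduct.one_def, one_mul]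
      simp [LinearMap.rTensor_tmul, this]
    have eqB : (e ⊗ₜ[k] (1 : O)) * Pe = Pe := by
      have C2 : ∀ w : O ⊗[k] O, (w ⊗ₜ[k] (1 : O)) * Pe =
          (((1 : O) ⊗ₜ[k] (LinearMap.mul' k O w)) ⊗ₜ[k] (1 : O)) * Pe := by
        intro w
        induction w using TensorProduct.induction_on with
        | zero => simp
        | tmul p q =>
            have hsplit : (p ⊗ₜ[k] q) ⊗ₜ[k] (1 : O) =
                ((p ⊗ₜ[k] (1 : O)) ⊗ₜ[k] (1 : O)) * (((1 : O) ⊗ₜ[k] q) ⊗ₜ[k] (1 : O)) := by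
              rw [Algebra.TensorProduct.tmul_mul_tmul, Algebra.TensorProduct.tmul_mul_tmul,
                mul_one, one_mul, mul_one]
            rw [LinearMap.mul'_apply, hsplit, mul_assoc, mul_left_comm, casE p,
              mul_left_comm, ← mul_assoc, Algebra.TensorProduct.tmul_mul_tmul,
              Algebra.TensorProduct.tmul_mul_tmul, mul_one]
        | add u v hu hv =>
            simp only [add_tmul, add_mul, map_add, tmul_add, hu, hv]
      rw [C2 e, he1, ← Algebra.TensorProduct.one_def, ← Algebra.TensorProduct.one_def, one_mul]
    have hkey : Pe = e ⊗ₜ[k] (1 : O) := by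
      calc Pe = (e ⊗ₜ[k] (1 : O)) * Pe := eqB.symm
        _ = Pe * (e ⊗ₜ[k] (1 : O)) := mul_comm _ _
        _ = e ⊗ₜ[k] (1 : O) := eqA
    -- identify the diagonal coaction with P
    have hPco : ∀ w : O ⊗[k] O,
        tensorCoact k O (Coalgebra.comul (R := k)) (Coalgebra.comul (R := k)) w
          = Stmt15Aux.P k O w := by
      intro w
      have hin : ∀ z : (O ⊗[k] O) ⊗[k] (O ⊗[k] O),
          TensorProduct.map (LinearMap.id : O ⊗[k] O →ₗ[k] O ⊗[k] O) (LinearMap.mul' k O)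
              ((TensorProduct.tensorTensorTensorComm k O O O O) z)
            = Algebra.TensorProduct.map (AlgHom.id k (O ⊗[k] O)) (Stmt15Aux.mA k O)
              ((Algebra.TensorProduct.tensorTensorTensorComm k k k k O O O O) z) := by
        intro z
        induction z using TensorProduct.induction_on with
        | zero => simp
        | tmul u v =>
            induction u using TensorProduct.induction_on with
            | zero => simp
            | tmul a b =>
                induction v using TensorProduct.induction_on with
                | zero => simp
                | tmul c d =>
                    simp [Algebra.TensorProduct.tensorTensorTensorComm_tmul,
                      TensorProduct.tensorTensorTensorComm_tmul, Stmt15Aux.mA,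
                      Algebra.TensorProduct.lmul'_apply_tmul]
                | add u' v' hu hv => simp only [tmul_add, map_add, hu, hv]
            | add u' v' hu hv => simp only [add_tmul, map_add, hu, hv]
        | add u' v' hu hv => simp only [map_add, hu, hv]
      induction w using TensorProduct.induction_on with
      | zero => simp
      | tmul a b =>
          rw [tensorCoact, Stmt15Aux.P]
          simp only [LinearMap.comp_apply, AlgHom.comp_apply, LinearEquiv.coe_coe,
            AlgEquiv.toAlgHom_eq_coe, AlgHom.coe_coe, TensorProduct.map_tmul,
            Algebra.TensorProduct.map_tmul, Bialgebra.comulAlgHom_apply]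
          exact hin (Coalgebra.comul a ⊗ₜ[k] Coalgebra.comul b)
      | add u v hu hv => simp only [map_add, hu, hv]
    have hrT : ∀ w : O ⊗[k] O, LinearMap.rTensor O s w =
        (TensorProduct.map (Stmt15Aux.ι1 k O) LinearMap.id w) * (e ⊗ₜ[k] (1 : O)) := by
      intro w
      induction w using TensorProduct.induction_on with
      | zero => simp
      | tmul u z =>
          simp only [LinearMap.rTensor_tmul, TensorProduct.map_tmul,
            Algebra.TensorProduct.tmul_mul_tmul, LinearMap.id_coe, id_eq, mul_one]
          rw [hsx]
          rfl
      | add u v hu hv => simp only [map_add, add_mul, hu, hv]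
    rw [hrT (Coalgebra.comul x), hPco, hsx, map_mul, Stmt15Aux.Pg1, ← hPedef, hkey]
    rfl
end
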